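/- arXiv:1409.8566 — 12 statements merged into one kernel-verified Lean document; each statement's English description precedes it below -/
import Mathlib

section
/- For every vector a = (a_1,…,a_n) of nonnegative integers, the number T_n(a) of Tesler matrices with hook sums a equals the Kostant partition function value K_{A_n}(a_1,…,a_n,−Σ_{i=1}^n a_i), i.e., the number of n×n upper triangular matrices with nonnegative integer entries whose k-th hook sum equals a_k for all k equals the number of functions m : {(i,j) : 1 ≤ i < j ≤ n+1} → ℕ such that Σ_{1≤i<j≤n+1} m(i,j)·(e_i − e_j) = (a_1,…,a_n,−Σ_{i=1}^n a_i) in ℤ^{n+1}. -/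
/-!
Moving the diagonal of an upper triangular `n × n` matrix `b` into an extra last column turns it
into a multiplicity function `m` on the positive roots `e_i - e_j` of `A_n`: `m i j = b i j` for
`i < j ≤ n` and `m i (n+1) = b i i`. The `k`-th coordinate of `∑ m i j (e_i - e_j)` is the row sum
minus the column sum of `m` at `k`, which for `k ≤ n` is exactly the `k`-th hook sum of `b`. The last
coordinate is then forced, because the coordinates of every root sum to zero.
-/

open Finset

/-- A Tesler matrix with hook sums `a`: an `n × n` upper triangular matrix with
nonnegative integer entries whose `k`-th hook sum equals `a k`. -/
def IsTeslerMatrix (n : ℕ) (a : Fin n → ℕ) (b : Fin n → Fin n → ℕ) : Prop :=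
  (∀ i j : Fin n, j < i → b i j = 0) ∧
  (∀ k : Fin n,
    (∑ j ∈ univ.filter (fun j => k ≤ j), (b k j : ℤ))
      - (∑ i ∈ univ.filter (fun i => i < k), (b i k : ℤ)) = (a k : ℤ))

/-- The Kostant partition function of type `A_n`: the number of ways to write
`b ∈ ℤ^{n+1}` as an `ℕ`-combination of the positive roots `e_i - e_j`,
`1 ≤ i < j ≤ n+1`.  The multiplicity function `m` is recorded as a function on all
pairs, vanishing off the set `{(i,j) : i < j}`. -/
noncomputable def kostant (n : ℕ) (b : Fin (n+1) → ℤ) : ℕ :=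
  Nat.card {m : Fin (n+1) → Fin (n+1) → ℕ //
    (∀ i j : Fin (n+1), ¬ i < j → m i j = 0) ∧
    (∑ i : Fin (n+1), ∑ j : Fin (n+1),
      (m i j : ℤ) • (Pi.single i (1 : ℤ) - Pi.single j (1 : ℤ))) = b}

section RootCombination

variable {ι : Type*} [Fintype ι] [DecidableEq ι]

def rootCombination (m : ι → ι → ℕ) : ι → ℤ :=
  ∑ i, ∑ j, (m i j : ℤ) • (Pi.single i (1 : ℤ) - Pi.single j (1 : ℤ))

theorem rootCombination_apply (m : ι → ι → ℕ) (k : ι) :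
    rootCombination m k = ∑ j, (m k j : ℤ) - ∑ i, (m i k : ℤ) := by
  simp [rootCombination, Finset.sum_apply, Pi.single_apply, mul_sub, Finset.sum_sub_distrib,
    mul_ite, mul_comm]

theorem sum_rootCombination_apply (m : ι → ι → ℕ) : ∑ k, rootCombination m k = 0 := by
  simp only [rootCombination_apply]
  rw [Finset.sum_sub_distrib, Finset.sum_comm, sub_self]

end RootCombination

theorem sum_filter_le_eq_add_sum_filter_lt {α M : Type*} [PartialOrder α] [Fintype α]
    [DecidableEq α] [LocallyFiniteOrderTop α] [DecidableLE α] [DecidableLT α]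
    [AddCommMonoid M] (k : α) (f : α → M) :
    ∑ j ∈ univ.filter (k ≤ ·), f j = f k + ∑ j ∈ univ.filter (k < ·), f j := by
  rw [filter_le_eq_Ici, filter_lt_eq_Ioi, ← Ioi_insert, sum_insert notMem_Ioi_self]

namespace TeslerMatrix

variable {n : ℕ}

def hookSum (b : Fin n → Fin n → ℕ) (k : Fin n) : ℤ :=
  ∑ j ∈ univ.filter (fun j => k ≤ j), (b k j : ℤ) - ∑ i ∈ univ.filter (fun i => i < k), (b i k : ℤ)

def appendNegSum (a : Fin n → ℕ) (k : Fin (n + 1)) : ℤ :=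
  if h : (k : ℕ) < n then (a ⟨k, h⟩ : ℤ) else -(∑ i : Fin n, (a i : ℤ))

def moveDiagToLastCol (b : Fin n → Fin n → ℕ) (i j : Fin (n + 1)) : ℕ :=
  Fin.lastCases 0 (fun i => Fin.lastCases (b i i) (fun j => if i < j then b i j else 0) j) i

def moveLastColToDiag (m : Fin (n + 1) → Fin (n + 1) → ℕ) (i j : Fin n) : ℕ :=
  if i = j then m i.castSucc (Fin.last n) else m i.castSucc j.castSucc

@[simp]
theorem moveDiagToLastCol_last (b : Fin n → Fin n → ℕ) (j : Fin (n + 1)) :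
    moveDiagToLastCol b (Fin.last n) j = 0 := by
  simp [moveDiagToLastCol]

@[simp]
theorem moveDiagToLastCol_castSucc_last (b : Fin n → Fin n → ℕ) (i : Fin n) :
    moveDiagToLastCol b i.castSucc (Fin.last n) = b i i := by
  simp [moveDiagToLastCol]

@[simp]
theorem moveDiagToLastCol_castSucc_castSucc (b : Fin n → Fin n → ℕ) (i j : Fin n) :
    moveDiagToLastCol b i.castSucc j.castSucc = if i < j then b i j else 0 := by
  simp [moveDiagToLastCol]

theorem moveDiagToLastCol_eq_zero_of_not_lt (b : Fin n → Fin n → ℕ) {i j : Fin (n + 1)}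
    (hij : ¬ i < j) : moveDiagToLastCol b i j = 0 := by
  induction i using Fin.lastCases with
  | last => simp
  | cast i =>
    induction j using Fin.lastCases with
    | last => exact absurd (Fin.castSucc_lt_last i) hij
    | cast j => simp_all

theorem moveLastColToDiag_eq_zero_of_lt {m : Fin (n + 1) → Fin (n + 1) → ℕ}
    (hm : ∀ i j, ¬ i < j → m i j = 0) {i j : Fin n} (hji : j < i) :
    moveLastColToDiag m i j = 0 := by
  rw [moveLastColToDiag, if_neg hji.ne', hm _ _ (by simpa using hji.le)]

theorem moveLastColToDiag_moveDiagToLastCol {b : Fin n → Fin n → ℕ}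
    (hb : ∀ i j, j < i → b i j = 0) : moveLastColToDiag (moveDiagToLastCol b) = b := by
  funext i j
  rcases lt_trichotomy i j with hij | rfl | hji
  · simp [moveLastColToDiag, hij.ne, hij]
  · simp [moveLastColToDiag]
  · simp [moveLastColToDiag, hji.ne', hji.not_gt, hb i j hji]

theorem moveDiagToLastCol_moveLastColToDiag {m : Fin (n + 1) → Fin (n + 1) → ℕ}
    (hm : ∀ i j, ¬ i < j → m i j = 0) : moveDiagToLastCol (moveLastColToDiag m) = m := by
  funext i j
  induction i using Fin.lastCases with
  | last => simp [hm _ _ (Fin.not_lt.2 (Fin.le_last j))]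
  | cast i =>
    induction j using Fin.lastCases with
    | last => simp [moveLastColToDiag]
    | cast j =>
      by_cases hij : i < j
      · simp [moveLastColToDiag, hij, hij.ne]
      · simp [hij, hm i.castSucc j.castSucc (by simpa using hij)]

theorem rootCombination_moveDiagToLastCol_castSucc (b : Fin n → Fin n → ℕ) (k : Fin n) :
    rootCombination (moveDiagToLastCol b) k.castSucc = hookSum b k := by
  rw [rootCombination_apply, Fin.sum_univ_castSucc, Fin.sum_univ_castSucc, hookSum,
    sum_filter_le_eq_add_sum_filter_lt, sum_filter, sum_filter]
  simp only [moveDiagToLastCol_castSucc_castSucc, moveDiagToLastCol_castSucc_last,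
    moveDiagToLastCol_last]
  push_cast
  ring

theorem rootCombination_moveDiagToLastCol_eq_iff (a : Fin n → ℕ) (b : Fin n → Fin n → ℕ) :
    rootCombination (moveDiagToLastCol b) = appendNegSum a ↔ ∀ k, hookSum b k = a k := by
  constructor
  · intro h k
    simpa [rootCombination_moveDiagToLastCol_castSucc, appendNegSum] using congrFun h k.castSucc
  · intro h
    funext k
    induction k using Fin.lastCases with
    | last =>
      have hsum := sum_rootCombination_apply (moveDiagToLastCol b)
      simp only [Fin.sum_univ_castSucc, rootCombination_moveDiagToLastCol_castSucc, h] at hsum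
      rw [appendNegSum, dif_neg (by simp)]
      linarith
    | cast k => simp [rootCombination_moveDiagToLastCol_castSucc, h, appendNegSum]

def equivRootMultiplicities (a : Fin n → ℕ) :
    {b : Fin n → Fin n → ℕ // IsTeslerMatrix n a b} ≃
      {m : Fin (n + 1) → Fin (n + 1) → ℕ // (∀ i j, ¬ i < j → m i j = 0) ∧
        rootCombination m = appendNegSum a} where
  toFun b := ⟨moveDiagToLastCol b.1, fun _ _ => moveDiagToLastCol_eq_zero_of_not_lt _,
    (rootCombination_moveDiagToLastCol_eq_iff a _).2 b.2.2⟩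
  invFun m := ⟨moveLastColToDiag m.1, fun _ _ => moveLastColToDiag_eq_zero_of_lt m.2.1,
    (rootCombination_moveDiagToLastCol_eq_iff a _).1 <|
      (moveDiagToLastCol_moveLastColToDiag m.2.1).symm ▸ m.2.2⟩
  left_inv b := Subtype.ext (moveLastColToDiag_moveDiagToLastCol b.2.1)
  right_inv m := Subtype.ext (moveDiagToLastCol_moveLastColToDiag m.2.1)

end TeslerMatrix

/-- The number of Tesler matrices with hook sums `(a_1, …, a_n)` equals the Kostant
partition function evaluated at `(a_1, …, a_n, -∑ a_i)`. -/
theorem card_teslerMatrices_eq_kostant (n : ℕ) (a : Fin n → ℕ) :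
    Nat.card {b : Fin n → Fin n → ℕ // IsTeslerMatrix n a b} =
      kostant n (fun k =>
        if h : (k : ℕ) < n then (a ⟨k, h⟩ : ℤ) else -(∑ i : Fin n, (a i : ℤ))) :=
  Nat.card_congr (TeslerMatrix.equivRootMultiplicities a)
end

section
/- Let a = (a_1,…,a_n) be a vector of nonnegative integers with a_1 > 0 and set s = (a_1, a_1+a_2, …, Σ_{i=1}^n a_i). Then the set F_n = { M ∈ Trans_n(s) : m_{i,j} = 0 whenever i − j ≥ 2 } is a face of the transportation polytope Trans_n(s), and there is an affine bijection from the Tesler polytope Tes_n(a) onto F_n. -/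
open Finset

/-- The Tesler polytope `Tes_n(a)`: upper triangular `n × n` matrices with nonnegative
real entries whose `k`-th hook sum equals `a k`.  Entries strictly below the diagonal
are required to be `0`. -/
def TeslerPolytope (n : ℕ) (a : Fin n → ℕ) : Set (Fin n → Fin n → ℝ) :=
  {x | (∀ i j : Fin n, j < i → x i j = 0) ∧
       (∀ i j : Fin n, i ≤ j → 0 ≤ x i j) ∧
       (∀ k : Fin n,
         (∑ j ∈ univ.filter (fun j => k ≤ j), x k j)
           - (∑ i ∈ univ.filter (fun i => i < k), x i k) = (a k : ℝ))}

/-- The transportation polytope `Trans_n(s)`: `n × n` matrices with nonnegative real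
entries whose `i`-th row sum and `i`-th column sum both equal `s i`. -/
def TransPolytope (n : ℕ) (s : Fin n → ℕ) : Set (Fin n → Fin n → ℝ) :=
  {M | (∀ i j : Fin n, 0 ≤ M i j) ∧
       (∀ i : Fin n, ∑ j : Fin n, M i j = (s i : ℝ)) ∧
       (∀ i : Fin n, ∑ j : Fin n, M j i = (s i : ℝ))}

/-! Write `s` for the partial sums of `a`. The map `hessenbergOf` sends a Tesler matrix `x` to
the matrix whose row `i` is row `i` of `x`, read from the diagonal on, rotated one step to the left
(so `x i i` lands in the last column), with the deficit `s i - ∑ k, x i k` placed in the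
subdiagonal slot `(i, i - 1)`. The sum of column `k - 1` of the image is then `s k` minus the
`k`-th hook sum of `x`, and the last column carries the trace, which is the total `∑ a`; so the
hook conditions become the column conditions. The deficits are nonnegative because `s K` is the
flow of `x` out of `{0, …, K}` plus its diagonal there, which bounds the flow from that block into
any later column. The face is exposed by minus the sum of the entries below the subdiagonal. -/

section Exposed

variable {E : Type*} [AddCommMonoid E] [TopologicalSpace E] [Module ℝ E]

theorem isExposed_setOf_eq_zero_of_nonpos {A : Set E} {l : StrongDual ℝ E}
    (hl : ∀ x ∈ A, l x ≤ 0) : IsExposed ℝ A {x ∈ A | l x = 0} := by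
  rintro ⟨x₀, hx₀A, hx₀⟩
  refine ⟨l, Set.ext fun x => ⟨fun ⟨hxA, hx⟩ => ⟨hxA, fun y hy => hx ▸ hl y hy⟩, ?_⟩⟩
  rintro ⟨hxA, hmax⟩
  exact ⟨hxA, le_antisymm (hl x hxA) (hx₀ ▸ hmax x₀ hx₀A)⟩

end Exposed

theorem isExposed_setOf_forall_eq_zero {ι κ : Type*} [Fintype ι] [Fintype κ]
    {A : Set (ι → κ → ℝ)} (hA : ∀ M ∈ A, ∀ i j, 0 ≤ M i j) (Z : ι → κ → Prop) :
    IsExposed ℝ A {M ∈ A | ∀ i j, Z i j → M i j = 0} := by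
  classical
  let S := univ.filter fun p : ι × κ => Z p.1 p.2
  let l : StrongDual ℝ (ι → κ → ℝ) :=
    -∑ p ∈ S, (ContinuousLinearMap.proj (R := ℝ) (φ := fun _ : κ => ℝ) p.2).comp
      (ContinuousLinearMap.proj p.1)
  have hl : ∀ M, l M = -∑ p ∈ S, M p.1 p.2 := fun M => by simp [l]
  convert isExposed_setOf_eq_zero_of_nonpos (A := A) (l := l)
    (fun M hM => by simpa [hl] using sum_nonneg fun p _ => hA M hM p.1 p.2) using 3 with M
  refine and_congr_right fun hM => ?_
  rw [hl, neg_eq_zero, sum_eq_zero_iff_of_nonneg fun p _ => hA M hM p.1 p.2]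
  simp [S]

theorem sum_ite_eq_sub_add {ι M : Type*} [Fintype ι] [DecidableEq ι] [AddCommGroup M] (a : ι)
    (f g : ι → M) : ∑ i, (if i = a then g i else f i) = ∑ i, f i - f a + g a := by
  rw [Fintype.sum_eq_add_sum_compl a, Fintype.sum_eq_add_sum_compl a f, if_pos rfl,
    sum_congr rfl fun i hi => if_neg (by simpa using hi)]
  abel

theorem sum_sub_sum_eq_sum_compl {ι : Type*} [Fintype ι] [DecidableEq ι] (x : ι → ι → ℝ)
    (S : Finset ι) :
    ∑ k ∈ S, (∑ l, x k l - ∑ l, x l k) =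
      ∑ k ∈ S, ∑ l ∈ Sᶜ, x k l - ∑ k ∈ S, ∑ l ∈ Sᶜ, x l k := by
  simp only [← sum_add_sum_compl S, sum_sub_distrib, sum_add_distrib]
  rw [sum_comm (s := S) (t := S) (f := fun k l => x l k)]
  ring

def hessenbergFace (n : ℕ) (s : Fin n → ℕ) : Set (Fin n → Fin n → ℝ) :=
  {M ∈ TransPolytope n s | ∀ i j : Fin n, (j : ℕ) + 2 ≤ (i : ℕ) → M i j = 0}

theorem diagonal_mem_hessenbergFace (n : ℕ) (s : Fin n → ℕ) :
    Matrix.diagonal (fun i => (s i : ℝ)) ∈ hessenbergFace n s := by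
  refine ⟨⟨fun i j => ?_, fun i => ?_, fun i => ?_⟩, fun i j hij => ?_⟩
  · by_cases h : i = j <;> simp [h]
  · simp [Matrix.diagonal_apply]
  · simp [Matrix.diagonal_apply]
  · exact Matrix.diagonal_apply_ne _ (Fin.ne_of_val_ne (by omega))

theorem isExposed_hessenbergFace (n : ℕ) (s : Fin n → ℕ) :
    IsExposed ℝ (TransPolytope n s) (hessenbergFace n s) :=
  isExposed_setOf_forall_eq_zero (fun _ hM => hM.1) _

section Triangular

variable {n : ℕ} {x : Fin n → Fin n → ℝ}

theorem sum_filter_le_eq_sum (hx : ∀ i j, j < i → x i j = 0) (k : Fin n) :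
    ∑ j ∈ univ.filter (fun j => k ≤ j), x k j = ∑ j, x k j :=
  sum_filter_of_ne fun j _ hj => not_lt.1 fun hjk => hj (hx k j hjk)

theorem sum_filter_lt_eq_sum_sub (hx : ∀ i j, j < i → x i j = 0) (k : Fin n) :
    ∑ i ∈ univ.filter (fun i => i < k), x i k = ∑ i, x i k - x k k := by
  rw [eq_sub_iff_add_eq, ← sum_filter_add_sum_filter_not univ (fun i => i < k)]
  congr 1
  refine (sum_eq_single_of_mem k (by simp) fun i hi hik => hx i k ?_).symm
  simp only [mem_filter, mem_univ, true_and, not_lt] at hi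
  exact lt_of_le_of_ne hi (Ne.symm hik)

theorem mem_teslerPolytope_iff (a : Fin n → ℕ) : x ∈ TeslerPolytope n a ↔
    (∀ i j, j < i → x i j = 0) ∧ (∀ i j, 0 ≤ x i j) ∧
      ∀ k, ∑ j, x k j - ∑ i, x i k + x k k = a k := by
  refine ⟨fun ⟨hx, hpos, hhook⟩ => ⟨hx, fun i j => ?_, fun k => ?_⟩,
    fun ⟨hx, hpos, hhook⟩ => ⟨hx, fun i j _ => hpos i j, fun k => ?_⟩⟩
  · rcases le_or_gt i j with h | h
    · exact hpos i j h
    · exact (hx i j h).ge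
  · rw [← hhook k, sum_filter_le_eq_sum hx, sum_filter_lt_eq_sum_sub hx]
    ring
  · rw [← hhook k, sum_filter_le_eq_sum hx, sum_filter_lt_eq_sum_sub hx]
    ring

theorem sum_col_zero_eq_diag [NeZero n] (hx : ∀ i j, j < i → x i j = 0) :
    ∑ i, x i 0 = x 0 0 :=
  sum_eq_single 0 (fun i _ hi => hx i 0 (Fin.pos_iff_ne_zero.2 hi)) (by simp)

end Triangular

def partialSums {n : ℕ} (a : Fin n → ℕ) (k : Fin n) : ℕ :=
  ∑ i ∈ univ.filter (fun i => i ≤ k), a i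

section PartialSums

variable {m : ℕ}

theorem partialSums_zero (a : Fin (m + 1) → ℕ) : partialSums a 0 = a 0 := by
  rw [partialSums, filter_congr (q := (· = 0)) fun i _ => nonpos_iff_eq_zero, sum_filter,
    sum_ite_eq' univ (0 : Fin (m + 1)) a, if_pos (mem_univ _)]

theorem partialSums_succ (a : Fin (m + 1) → ℕ) (j : Fin m) :
    partialSums a j.succ = partialSums a j.castSucc + a j.succ := by
  have : univ.filter (· ≤ j.succ) = insert j.succ (univ.filter (· ≤ j.castSucc)) := by
    ext i
    simp only [mem_filter, mem_univ, true_and, mem_insert]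
    rw [Fin.le_castSucc_iff, le_iff_eq_or_lt]
  rw [partialSums, this, sum_insert (by simp), add_comm]
  rfl

theorem partialSums_last (a : Fin (m + 1) → ℕ) : partialSums a (Fin.last m) = ∑ i, a i := by
  simp [partialSums, Fin.le_last]

end PartialSums

section Hessenberg

variable {m : ℕ}

def hessenbergOf (s : Fin (m + 1) → ℝ) (x : Fin (m + 1) → Fin (m + 1) → ℝ) :
    Fin (m + 1) → Fin (m + 1) → ℝ :=
  fun i => Fin.lastCases (x i i) fun j => if i = j.succ then s i - ∑ k, x i k else x i j.succ

variable (s : Fin (m + 1) → ℝ) (x : Fin (m + 1) → Fin (m + 1) → ℝ)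

@[simp]
theorem hessenbergOf_last (i : Fin (m + 1)) : hessenbergOf s x i (Fin.last m) = x i i :=
  Fin.lastCases_last

@[simp]
theorem hessenbergOf_castSucc (i : Fin (m + 1)) (j : Fin m) :
    hessenbergOf s x i j.castSucc = if i = j.succ then s i - ∑ k, x i k else x i j.succ :=
  Fin.lastCases_castSucc j

def hessenbergOfAffine :
    (Fin (m + 1) → Fin (m + 1) → ℝ) →ᵃ[ℝ] (Fin (m + 1) → Fin (m + 1) → ℝ) where
  toFun := hessenbergOf s
  linear :=
    { toFun := hessenbergOf 0
      map_add' x y := by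
        ext i j
        induction j using Fin.lastCases
        · simp
        · simp only [hessenbergOf_castSucc, Pi.add_apply, Pi.zero_apply, sum_add_distrib]
          split_ifs <;> ring
      map_smul' c x := by
        ext i j
        induction j using Fin.lastCases <;> simp [mul_sum] }
  map_vadd' x v := by
    ext i j
    induction j using Fin.lastCases
    · simp
    · simp only [LinearMap.coe_mk, AddHom.coe_mk, hessenbergOf_castSucc, vadd_eq_add,
        Pi.add_apply, Pi.zero_apply, sum_add_distrib]
      split_ifs <;> ring

theorem sum_hessenbergOf_row_zero : ∑ j, hessenbergOf s x 0 j = ∑ j, x 0 j := by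
  rw [Fin.sum_univ_castSucc, Fin.sum_univ_succ (x 0), add_comm]
  simp [(Fin.succ_ne_zero _).symm]

theorem sum_hessenbergOf_row_succ (hx : ∀ i j, j < i → x i j = 0) (i : Fin m) :
    ∑ j, hessenbergOf s x i.succ j = s i.succ := by
  rw [Fin.sum_univ_castSucc]
  simp only [hessenbergOf_castSucc, hessenbergOf_last, Fin.succ_inj]
  simp_rw [eq_comm (a := i)]
  rw [sum_ite_eq_sub_add, Fin.sum_univ_succ (x i.succ), hx _ _ i.succ_pos]
  ring

theorem sum_hessenbergOf_col_castSucc (j : Fin m) :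
    ∑ i, hessenbergOf s x i j.castSucc =
      s j.succ - (∑ k, x j.succ k - ∑ i, x i j.succ + x j.succ j.succ) := by
  simp only [hessenbergOf_castSucc, sum_ite_eq_sub_add]
  ring

theorem sum_hessenbergOf_col_last : ∑ i, hessenbergOf s x i (Fin.last m) = ∑ i, x i i := by
  simp

theorem hessenbergOf_eq_zero (hx : ∀ i j, j < i → x i j = 0) {i j : Fin (m + 1)}
    (hij : (j : ℕ) + 2 ≤ i) : hessenbergOf s x i j = 0 := by
  induction j using Fin.lastCases with
  | last => simp only [Fin.val_last] at hij; omega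
  | cast j =>
    simp only [Fin.val_castSucc] at hij
    have hji : j.succ < i := by rw [Fin.lt_def, Fin.val_succ]; omega
    rw [hessenbergOf_castSucc, if_neg hji.ne', hx _ _ hji]

end Hessenberg

section Tesler

variable {m : ℕ} {a : Fin (m + 1) → ℕ} {x : Fin (m + 1) → Fin (m + 1) → ℝ}

theorem sum_le_partialSums (hx : x ∈ TeslerPolytope (m + 1) a) {K l : Fin (m + 1)}
    (hKl : K < l) :
    ∑ i ∈ univ.filter (· ≤ K), x i l ≤ partialSums a K := by
  obtain ⟨hlow, hpos, hhook⟩ := (mem_teslerPolytope_iff a).1 hx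
  set S := univ.filter (· ≤ K)
  have hinflow : ∑ k ∈ S, ∑ i ∈ Sᶜ, x i k = 0 :=
    sum_eq_zero fun k hk => sum_eq_zero fun i hi => hlow i k (by
      simp only [S, mem_compl, mem_filter, mem_univ, true_and, not_le] at hk hi
      exact hk.trans_lt hi)
  have hcut : (partialSums a K : ℝ) = ∑ k ∈ S, (∑ i ∈ Sᶜ, x k i + x k k) := by
    rw [partialSums, Nat.cast_sum, ← sum_congr rfl fun k _ => hhook k, sum_add_distrib,
      sum_sub_sum_eq_sum_compl, hinflow, sub_zero, sum_add_distrib]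
  rw [hcut]
  refine sum_le_sum fun k _ => ?_
  have : l ∈ Sᶜ := by simpa [S] using hKl
  linarith [single_le_sum (fun i _ => hpos k i) this, hpos k k]

theorem partialSums_sub_sum_nonneg (hx : x ∈ TeslerPolytope (m + 1) a) (j : Fin m) :
    0 ≤ (partialSums a j.succ : ℝ) - ∑ k, x j.succ k := by
  have hhook := hx.2.2 j.succ
  rw [sum_filter_le_eq_sum hx.1] at hhook
  have hfilter : univ.filter (· < j.succ) = univ.filter (· ≤ j.castSucc) :=
    filter_congr fun i _ => Fin.le_castSucc_iff.symm
  rw [hfilter] at hhook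
  have := sum_le_partialSums hx (Fin.castSucc_lt_succ : j.castSucc < j.succ)
  rw [partialSums_succ, Nat.cast_add, ← hhook]
  linarith

theorem sums_hessenbergOf_eq_partialSums_iff (hx : ∀ i j, j < i → x i j = 0) :
    (∀ k, ∑ j, x k j - ∑ i, x i k + x k k = a k) ↔
      (∀ i, ∑ j, hessenbergOf (fun k => (partialSums a k : ℝ)) x i j = partialSums a i) ∧
        ∀ j, ∑ i, hessenbergOf (fun k => (partialSums a k : ℝ)) x i j = partialSums a j := by
  constructor
  · intro hhook
    refine ⟨fun i => ?_, fun j => ?_⟩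
    · induction i using Fin.cases with
      | zero =>
        rw [sum_hessenbergOf_row_zero, partialSums_zero, ← hhook 0, sum_col_zero_eq_diag hx]
        ring
      | succ i => exact sum_hessenbergOf_row_succ _ x hx i
    · induction j using Fin.lastCases with
      | last =>
        rw [sum_hessenbergOf_col_last, partialSums_last, Nat.cast_sum,
          ← sum_congr rfl fun k _ => hhook k, sum_add_distrib, sum_sub_distrib, sum_comm (f := x)]
        ring
      | cast j =>
        rw [sum_hessenbergOf_col_castSucc, hhook, partialSums_succ]
        push_cast
        ring
  · rintro ⟨hrow, hcol⟩ k
    induction k using Fin.cases with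
    | zero =>
      rw [sum_col_zero_eq_diag hx, ← sum_hessenbergOf_row_zero _ x, hrow, partialSums_zero]
      ring
    | succ j =>
      have := hcol j.castSucc
      rw [sum_hessenbergOf_col_castSucc, partialSums_succ] at this
      push_cast at this
      linarith

theorem hessenbergOf_mem_hessenbergFace (hx : x ∈ TeslerPolytope (m + 1) a) :
    hessenbergOf (fun k => (partialSums a k : ℝ)) x ∈ hessenbergFace (m + 1) (partialSums a) := by
  obtain ⟨hlow, hpos, hhook⟩ := (mem_teslerPolytope_iff a).1 hx
  obtain ⟨hrow, hcol⟩ := (sums_hessenbergOf_eq_partialSums_iff hlow).1 hhook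
  refine ⟨⟨fun i j => ?_, hrow, hcol⟩, fun i j hij => hessenbergOf_eq_zero _ x hlow hij⟩
  induction j using Fin.lastCases with
  | last => simpa using hpos i i
  | cast j =>
    rw [hessenbergOf_castSucc]
    split_ifs with h
    · exact h ▸ partialSums_sub_sum_nonneg hx j
    · exact hpos _ _

end Tesler

section TeslerOf

variable {m : ℕ}

def teslerOf (M : Fin (m + 1) → Fin (m + 1) → ℝ) : Fin (m + 1) → Fin (m + 1) → ℝ :=
  fun i k => if k < i then 0 else
    Fin.cases (M i (Fin.last m))
      (fun j => if i = j.succ then M i (Fin.last m) else M i j.castSucc) k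

variable (M : Fin (m + 1) → Fin (m + 1) → ℝ)

theorem teslerOf_self (i : Fin (m + 1)) : teslerOf M i i = M i (Fin.last m) := by
  induction i using Fin.cases <;> simp [teslerOf]

theorem teslerOf_hessenbergOf (s : Fin (m + 1) → ℝ) {x : Fin (m + 1) → Fin (m + 1) → ℝ}
    (hx : ∀ i j, j < i → x i j = 0) : teslerOf (hessenbergOf s x) = x := by
  ext i k
  rw [teslerOf]
  split_ifs with hki
  · exact (hx i k hki).symm
  induction k using Fin.cases with
  | zero => simp [nonpos_iff_eq_zero.1 (not_lt.1 hki)]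
  | succ j =>
    simp only [Fin.cases_succ, hessenbergOf_castSucc]
    split_ifs with h
    · simp [h]
    · rfl

theorem hessenbergOf_teslerOf_of_ne (s : Fin (m + 1) → ℝ)
    (hM : ∀ i j : Fin (m + 1), (j : ℕ) + 2 ≤ i → M i j = 0)
    {i j : Fin (m + 1)} (hij : (j : ℕ) + 1 ≠ i) : hessenbergOf s (teslerOf M) i j = M i j := by
  induction j using Fin.lastCases with
  | last => simp [teslerOf_self]
  | cast j =>
    have hi : i ≠ j.succ := fun h => hij (by simp [h])
    simp only [hessenbergOf_castSucc, if_neg hi, teslerOf, Fin.cases_succ]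
    split_ifs with hlt
    · rw [Fin.lt_def, Fin.val_succ] at hlt
      exact (hM i _ (by simp only [Fin.val_castSucc]; omega)).symm
    · rfl

theorem teslerOf_eq_zero {i k : Fin (m + 1)} (h : k < i) : teslerOf M i k = 0 :=
  if_pos h

theorem teslerOf_nonneg (hM : ∀ i j, 0 ≤ M i j) (i k : Fin (m + 1)) : 0 ≤ teslerOf M i k := by
  rw [teslerOf]
  split_ifs
  · rfl
  induction k using Fin.cases with
  | zero => exact hM _ _
  | succ j => simp only [Fin.cases_succ]; split_ifs <;> exact hM _ _

variable {a : Fin (m + 1) → ℕ} {M}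

theorem hessenbergOf_teslerOf (hM : M ∈ hessenbergFace (m + 1) (partialSums a)) :
    hessenbergOf (fun k => (partialSums a k : ℝ)) (teslerOf M) = M := by
  obtain ⟨⟨-, hrow, -⟩, hzero⟩ := hM
  ext i j
  by_cases hij : (j : ℕ) + 1 = i
  · induction i using Fin.cases with
    | zero => simp at hij
    | succ i =>
      -- both matrices have row sum `s i`, and they agree off the subdiagonal
      have hsum := sum_hessenbergOf_row_succ (fun k => (partialSums a k : ℝ)) _
        (fun _ _ => teslerOf_eq_zero M) i
      rw [← hrow i.succ] at hsum
      refine (sum_eq_sum_iff_single (mem_univ j) fun j' _ hj' => ?_).1 hsum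
      exact hessenbergOf_teslerOf_of_ne M _ hzero fun h => hj' (Fin.ext (by omega))
  · exact hessenbergOf_teslerOf_of_ne M _ hzero hij

theorem teslerOf_mem_teslerPolytope (hM : M ∈ hessenbergFace (m + 1) (partialSums a)) :
    teslerOf M ∈ TeslerPolytope (m + 1) a := by
  have hlow : ∀ i k, k < i → teslerOf M i k = 0 := fun _ _ => teslerOf_eq_zero M
  refine (mem_teslerPolytope_iff a).2 ⟨hlow, teslerOf_nonneg M hM.1.1, ?_⟩
  rw [sums_hessenbergOf_eq_partialSums_iff hlow, hessenbergOf_teslerOf hM]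
  exact hM.1.2

end TeslerOf

theorem bijOn_hessenbergOf {m : ℕ} (a : Fin (m + 1) → ℕ) :
    Set.BijOn (hessenbergOf fun k => (partialSums a k : ℝ)) (TeslerPolytope (m + 1) a)
      (hessenbergFace (m + 1) (partialSums a)) :=
  Set.InvOn.bijOn ⟨fun _ hx => teslerOf_hessenbergOf _ hx.1, fun _ hM => hessenbergOf_teslerOf hM⟩
    (fun _ => hessenbergOf_mem_hessenbergFace) (fun _ => teslerOf_mem_teslerPolytope)

theorem teslerPolytope_iso_face_transPolytope_general (n : ℕ) (hn : 0 < n) (a : Fin n → ℕ) :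
    (({M ∈ TransPolytope n (fun k => ∑ i ∈ univ.filter (fun i => i ≤ k), a i) |
        ∀ i j : Fin n, (j : ℕ) + 2 ≤ (i : ℕ) → M i j = 0} : Set (Fin n → Fin n → ℝ)).Nonempty
      ∧ IsExposed ℝ (TransPolytope n (fun k => ∑ i ∈ univ.filter (fun i => i ≤ k), a i))
          {M ∈ TransPolytope n (fun k => ∑ i ∈ univ.filter (fun i => i ≤ k), a i) |
            ∀ i j : Fin n, (j : ℕ) + 2 ≤ (i : ℕ) → M i j = 0})
    ∧ ∃ Φ : (Fin n → Fin n → ℝ) →ᵃ[ℝ] (Fin n → Fin n → ℝ),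
        Set.BijOn Φ (TeslerPolytope n a)
          {M ∈ TransPolytope n (fun k => ∑ i ∈ univ.filter (fun i => i ≤ k), a i) |
            ∀ i j : Fin n, (j : ℕ) + 2 ≤ (i : ℕ) → M i j = 0} := by
  obtain ⟨m, rfl⟩ : ∃ m, n = m + 1 := ⟨n - 1, by omega⟩
  exact ⟨⟨⟨_, diagonal_mem_hessenbergFace _ (partialSums a)⟩, isExposed_hessenbergFace _ _⟩,
    hessenbergOfAffine _, bijOn_hessenbergOf a⟩

/-- Let `a = (a_1, …, a_n)` be nonnegative integers with `a_1 > 0` and let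
`s = (a_1, a_1 + a_2, …, ∑ a_i)` be the vector of partial sums.  Then the set
`F_n = {M ∈ Trans_n(s) : m_{i,j} = 0 for i - j ≥ 2}` is a (nonempty, exposed) face of
`Trans_n(s)`, and there is an affine bijection from `Tes_n(a)` onto `F_n`. -/
theorem teslerPolytope_iso_face_transPolytope (n : ℕ) (hn : 0 < n) (a : Fin n → ℕ)
    (ha : 0 < a ⟨0, hn⟩) :
    (({M ∈ TransPolytope n (fun k => ∑ i ∈ univ.filter (fun i => i ≤ k), a i) |
        ∀ i j : Fin n, (j : ℕ) + 2 ≤ (i : ℕ) → M i j = 0} : Set (Fin n → Fin n → ℝ)).Nonempty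
      ∧ IsExposed ℝ (TransPolytope n (fun k => ∑ i ∈ univ.filter (fun i => i ≤ k), a i))
          {M ∈ TransPolytope n (fun k => ∑ i ∈ univ.filter (fun i => i ≤ k), a i) |
            ∀ i j : Fin n, (j : ℕ) + 2 ≤ (i : ℕ) → M i j = 0})
    ∧ ∃ Φ : (Fin n → Fin n → ℝ) →ᵃ[ℝ] (Fin n → Fin n → ℝ),
        Set.BijOn Φ (TeslerPolytope n a)
          {M ∈ TransPolytope n (fun k => ∑ i ∈ univ.filter (fun i => i ≤ k), a i) |
            ∀ i j : Fin n, (j : ℕ) + 2 ≤ (i : ℕ) → M i j = 0} :=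
  teslerPolytope_iso_face_transPolytope_general n hn a
end

section
/- Let a = (a_1,…,a_n) be a vector of nonnegative integers and let T_1 and T_2 be two a-Tesler tableaux with dim(T_1) = dim(T_2) = 0. If T_1 ≤ T_2 componentwise, then T_1 = T_2. -/
open Finset

/-- An `a`-Tesler tableau: a `{0,1}`-filling `T` of the reverse staircase
`{(i,j) : 1 ≤ i ≤ j ≤ n}` (recorded as a function on all pairs, vanishing below the
diagonal) such that:
(1) if `a i > 0` then row `i` contains a `1`;
(2) if `i < j` and `T i j = 1` then row `j` contains a `1`;
(3) if `a j = 0` and `T i j = 0` for all `i < j`, then row `j` is zero. -/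
def IsTeslerTableau (n : ℕ) (a : Fin n → ℕ) (T : Fin n → Fin n → ℕ) : Prop :=
  (∀ i j : Fin n, ¬ i ≤ j → T i j = 0) ∧
  (∀ i j : Fin n, T i j ≤ 1) ∧
  (∀ i : Fin n, 0 < a i → ∃ j : Fin n, i ≤ j ∧ T i j = 1) ∧
  (∀ i j : Fin n, i < j → T i j = 1 → ∃ k : Fin n, j ≤ k ∧ T j k = 1) ∧
  (∀ j : Fin n, a j = 0 → (∀ i : Fin n, i < j → T i j = 0) →
    ∀ k : Fin n, j ≤ k → T j k = 0)

/-- The dimension of a Tesler tableau: `∑ i (r_i - 1)` where `r_i` is the number of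
`1`'s in row `i` if row `i` is nonzero, and `r_i = 1` if row `i` is zero.  (With
truncated `ℕ`-subtraction, both cases are `(number of 1's in row i) - 1`.) -/
def tabDim (n : ℕ) (T : Fin n → Fin n → ℕ) : ℕ :=
  ∑ i : Fin n, ((univ.filter (fun j => T i j = 1)).card - 1)

/-
The rows of a zero-dimensional tableau contain at most one `1`, so a row of `T₁` lying under a
row of `T₂` equals it as soon as both rows are nonzero or both are zero. By conditions (1)–(3), row
`i` of a Tesler tableau is nonzero exactly when `a i > 0` or column `i` has a `1` above the
diagonal; the latter only involves earlier rows, so induction on `i` shows the rows agree.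
-/

theorem IsTeslerTableau.exists_row_eq_one_iff {n : ℕ} {a : Fin n → ℕ} {T : Fin n → Fin n → ℕ}
    (hT : IsTeslerTableau n a T) (i : Fin n) :
    (∃ j, T i j = 1) ↔ 0 < a i ∨ ∃ k < i, T k i = 1 := by
  obtain ⟨hlower, hbound, hpos, hcol, hzero⟩ := hT
  constructor
  · rintro ⟨j, hj⟩
    by_contra! h
    have hij : i ≤ j := by
      by_contra hij
      simp [hlower i j hij] at hj
    have hcol_zero : ∀ k < i, T k i = 0 := fun k hk => by
      have := hbound k i
      have := h.2 k hk
      omega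
    simp [hzero i (by omega) hcol_zero j hij] at hj
  · rintro (ha | ⟨k, hk, hki⟩)
    · obtain ⟨j, -, hj⟩ := hpos i ha
      exact ⟨j, hj⟩
    · obtain ⟨j, -, hj⟩ := hcol k i hk hki
      exact ⟨j, hj⟩

theorem card_filter_eq_one_le_one_of_tabDim_eq_zero {n : ℕ} {T : Fin n → Fin n → ℕ}
    (hd : tabDim n T = 0) (i : Fin n) : #{j | T i j = 1} ≤ 1 := by
  have := sum_eq_zero_iff.mp hd i (mem_univ i)
  omega

theorem eq_of_le_of_card_filter_eq_one_le_one {α : Type*} [Fintype α] {r₁ r₂ : α → ℕ}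
    (hle : ∀ j, r₁ j ≤ r₂ j) (hbound : ∀ j, r₂ j ≤ 1) (hcard : #{j | r₂ j = 1} ≤ 1)
    (hnonzero : (∃ j, r₂ j = 1) → ∃ j, r₁ j = 1) : r₁ = r₂ := by
  funext m
  have := hle m
  have := hbound m
  by_cases hm : r₂ m = 1
  · obtain ⟨j, hj⟩ := hnonzero ⟨m, hm⟩
    have hj₂ : r₂ j = 1 := le_antisymm (hbound j) (hj ▸ hle j)
    have hjm : j = m := card_le_one.mp hcard j (by simpa using hj₂) m (by simpa using hm)
    subst hjm
    omega
  · omega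

theorem zero_dimensional_tesler_tableaux_distinct_general (n : ℕ) (a : Fin n → ℕ)
    (T₁ T₂ : Fin n → Fin n → ℕ)
    (h₁ : IsTeslerTableau n a T₁) (h₂ : IsTeslerTableau n a T₂)
    (hd₂ : tabDim n T₂ = 0)
    (hle : ∀ i j : Fin n, T₁ i j ≤ T₂ i j) :
    T₁ = T₂ := by
  funext i
  induction i using WellFoundedLT.induction with
  | _ i ih =>
    refine eq_of_le_of_card_filter_eq_one_le_one (hle i) (h₂.2.1 i)
      (card_filter_eq_one_le_one_of_tabDim_eq_zero hd₂ i) fun h => ?_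
    rw [h₂.exists_row_eq_one_iff] at h
    rw [h₁.exists_row_eq_one_iff]
    exact h.imp_right fun ⟨k, hk, hki⟩ => ⟨k, hk, (congrFun (ih k hk) i).trans hki⟩

/-- Two zero-dimensional `a`-Tesler tableaux that are componentwise comparable are
equal. -/
theorem zero_dimensional_tesler_tableaux_distinct (n : ℕ) (a : Fin n → ℕ)
    (T₁ T₂ : Fin n → Fin n → ℕ)
    (h₁ : IsTeslerTableau n a T₁) (h₂ : IsTeslerTableau n a T₂)
    (hd₁ : tabDim n T₁ = 0) (hd₂ : tabDim n T₂ = 0)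
    (hle : ∀ i j : Fin n, T₁ i j ≤ T₂ i j) :
    T₁ = T₂ :=
  zero_dimensional_tesler_tableaux_distinct_general n a T₁ T₂ h₁ h₂ hd₂ hle
end

section
/- Let a = (a_1,…,a_n) be a vector of nonnegative integers and let T_1 and T_2 be two a-Tesler tableaux. Then the componentwise maximum T defined by T(i,j) = max(T_1(i,j), T_2(i,j)) is also an a-Tesler tableau. -/
open Finset

/- A {0,1}-valued entry of the maximum is 1 exactly when it is 1 in one of the two tableaux, and
0 exactly when it is 0 in both. So every row containing a 1 in `T₁` or `T₂` contains a 1 in the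
maximum, which gives conditions (1) and (2); and a column of the maximum that is zero above the
diagonal is zero above the diagonal in both tableaux, so condition (3) for `T₁` and `T₂` makes the
row of both, hence of the maximum, vanish. -/

theorem max_eq_one_iff_of_le_one {a b : ℕ} (ha : a ≤ 1) (hb : b ≤ 1) :
    max a b = 1 ↔ a = 1 ∨ b = 1 := by
  omega

/-- The componentwise maximum of two `a`-Tesler tableaux is an `a`-Tesler tableau. -/
theorem max_isTeslerTableau (n : ℕ) (a : Fin n → ℕ) (T₁ T₂ : Fin n → Fin n → ℕ)
    (h₁ : IsTeslerTableau n a T₁) (h₂ : IsTeslerTableau n a T₂) :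
    IsTeslerTableau n a (fun i j => max (T₁ i j) (T₂ i j)) := by
  obtain ⟨below₁, le_one₁, row₁, col₁, zero₁⟩ := h₁
  obtain ⟨below₂, le_one₂, row₂, col₂, zero₂⟩ := h₂
  have max_eq_one (i j : Fin n) : max (T₁ i j) (T₂ i j) = 1 ↔ T₁ i j = 1 ∨ T₂ i j = 1 :=
    max_eq_one_iff_of_le_one (le_one₁ i j) (le_one₂ i j)
  have row_of_left (j : Fin n) : (∃ k, j ≤ k ∧ T₁ j k = 1) →
      ∃ k, j ≤ k ∧ max (T₁ j k) (T₂ j k) = 1 :=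
    fun ⟨k, hjk, hk⟩ => ⟨k, hjk, (max_eq_one j k).2 (.inl hk)⟩
  have row_of_right (j : Fin n) : (∃ k, j ≤ k ∧ T₂ j k = 1) →
      ∃ k, j ≤ k ∧ max (T₁ j k) (T₂ j k) = 1 :=
    fun ⟨k, hjk, hk⟩ => ⟨k, hjk, (max_eq_one j k).2 (.inr hk)⟩
  refine ⟨fun i j h => by simp [below₁ i j h, below₂ i j h],
    fun i j => max_le (le_one₁ i j) (le_one₂ i j), fun i hi => row_of_left i (row₁ i hi),
    fun i j hij h => ?_, fun j hj hz k hk => ?_⟩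
  · rcases (max_eq_one i j).1 h with h | h
    exacts [row_of_left j (col₁ i j hij h), row_of_right j (col₂ i j hij h)]
  · simp only [Nat.max_eq_zero_iff] at hz ⊢
    exact ⟨zero₁ j hj (fun i hi => (hz i hi).1) k hk, zero₂ j hj (fun i hi => (hz i hi).2) k hk⟩
end

section
/- Let a = (a_1,…,a_n) be a vector of nonnegative integers and let F be a face of the Tesler polytope Tes_n(a). Define T : {(i,j) : 1 ≤ i ≤ j ≤ n} → {0,1} by T(i,j) = 0 if every point (x_{i,j}) of F satisfies x_{i,j} = 0, and T(i,j) = 1 otherwise. Then T is an a-Tesler tableau. -/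
open Finset
open scoped Classical

/-!
For `x ∈ Tes_n(a)` the hook condition reads: sum of row `k` = `a k` + sum of column `k` above the
diagonal, with all entries nonnegative. So row `k` of `x` is nonzero as soon as `a k > 0` or column
`k` has a nonzero entry, and it vanishes when `a k = 0` and column `k` vanishes. These pointwise
facts pass to the support of any nonempty subset of the polytope, in particular of a face.
-/

namespace TeslerPolytope

variable {n : ℕ} {a : Fin n → ℕ} {x : Fin n → Fin n → ℝ}

lemma row_sum_eq (hx : x ∈ TeslerPolytope n a) (k : Fin n) :
    ∑ j ∈ univ.filter (k ≤ ·), x k j = a k + ∑ i ∈ univ.filter (· < k), x i k := by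
  linarith [hx.2.2 k]

lemma col_sum_nonneg (hx : x ∈ TeslerPolytope n a) (k : Fin n) :
    0 ≤ ∑ i ∈ univ.filter (· < k), x i k :=
  sum_nonneg fun i hi => hx.2.1 i k (mem_filter.mp hi).2.le

lemma row_sum_eq_zero_iff (hx : x ∈ TeslerPolytope n a) (k : Fin n) :
    ∑ j ∈ univ.filter (k ≤ ·), x k j = 0 ↔ ∀ j, k ≤ j → x k j = 0 := by
  rw [sum_eq_zero_iff_of_nonneg fun j hj => hx.2.1 k j (mem_filter.mp hj).2]
  simp

lemma exists_row_ne_zero_of_pos (hx : x ∈ TeslerPolytope n a) {k : Fin n} (hk : 0 < a k) :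
    ∃ j, k ≤ j ∧ x k j ≠ 0 := by
  by_contra! h
  have hrow := (row_sum_eq_zero_iff hx k).mpr h
  have hak : (0 : ℝ) < a k := by exact_mod_cast hk
  linarith [row_sum_eq hx k, col_sum_nonneg hx k]

lemma exists_row_ne_zero_of_ne_zero (hx : x ∈ TeslerPolytope n a) {i j : Fin n} (hij : i < j)
    (hxij : x i j ≠ 0) : ∃ k, j ≤ k ∧ x j k ≠ 0 := by
  by_contra! h
  have hrow := (row_sum_eq_zero_iff hx j).mpr h
  have hcol : x i j ≤ ∑ i' ∈ univ.filter (· < j), x i' j :=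
    single_le_sum (fun i' hi' => hx.2.1 i' j (mem_filter.mp hi').2.le) (by simp [hij])
  have hpos : 0 < x i j := (hx.2.1 i j hij.le).lt_of_ne' hxij
  linarith [row_sum_eq hx j, (Nat.cast_nonneg (a j) : (0 : ℝ) ≤ a j)]

lemma row_eq_zero_of_col_eq_zero (hx : x ∈ TeslerPolytope n a) {j : Fin n} (hj : a j = 0)
    (hcol : ∀ i, i < j → x i j = 0) : ∀ k, j ≤ k → x j k = 0 := by
  rw [← row_sum_eq_zero_iff hx, row_sum_eq hx, hj,
    sum_eq_zero fun i hi => hcol i (mem_filter.mp hi).2]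
  simp

end TeslerPolytope

noncomputable def supportTableau {n : ℕ} (S : Set (Fin n → Fin n → ℝ)) (i j : Fin n) : ℕ :=
  if ∀ x ∈ S, x i j = 0 then 0 else 1

section supportTableau

variable {n : ℕ} {S : Set (Fin n → Fin n → ℝ)} {i j : Fin n}

lemma supportTableau_eq_zero_iff : supportTableau S i j = 0 ↔ ∀ x ∈ S, x i j = 0 := by
  unfold supportTableau
  split_ifs with h <;> simpa using h

lemma supportTableau_eq_one_iff : supportTableau S i j = 1 ↔ ∃ x ∈ S, x i j ≠ 0 := by
  unfold supportTableau
  split_ifs with h <;> simpa using h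

lemma supportTableau_le_one : supportTableau S i j ≤ 1 := by
  unfold supportTableau
  split_ifs <;> simp

lemma isTeslerTableau_supportTableau {a : Fin n → ℕ} (hS : S ⊆ TeslerPolytope n a)
    (hne : S.Nonempty) : IsTeslerTableau n a (supportTableau S) := by
  refine ⟨fun i j hij => ?_, fun i j => supportTableau_le_one, fun i hi => ?_,
    fun i j hij hT => ?_, fun j hj hcol k hjk => ?_⟩
  · exact supportTableau_eq_zero_iff.mpr fun x hx => (hS hx).1 i j (not_le.mp hij)
  · obtain ⟨x, hx⟩ := hne
    obtain ⟨j, hij, hxij⟩ := TeslerPolytope.exists_row_ne_zero_of_pos (hS hx) hi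
    exact ⟨j, hij, supportTableau_eq_one_iff.mpr ⟨x, hx, hxij⟩⟩
  · obtain ⟨x, hx, hxij⟩ := supportTableau_eq_one_iff.mp hT
    obtain ⟨k, hjk, hxjk⟩ := TeslerPolytope.exists_row_ne_zero_of_ne_zero (hS hx) hij hxij
    exact ⟨k, hjk, supportTableau_eq_one_iff.mpr ⟨x, hx, hxjk⟩⟩
  · exact supportTableau_eq_zero_iff.mpr fun x hx =>
      TeslerPolytope.row_eq_zero_of_col_eq_zero (hS hx) hj
        (fun i hi => supportTableau_eq_zero_iff.mp (hcol i hi) x hx) k hjk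

end supportTableau

/-- If `F` is a (nonempty, exposed) face of the Tesler polytope `Tes_n(a)`, then the
support tableau of `F` — which records a `0` in position `(i,j)` if the coordinate
equality `x_{i,j} = 0` holds on all of `F` and a `1` otherwise — is an `a`-Tesler
tableau. -/
theorem support_of_face_isTeslerTableau (n : ℕ) (a : Fin n → ℕ)
    (F : Set (Fin n → Fin n → ℝ)) (hne : F.Nonempty)
    (hface : IsExposed ℝ (TeslerPolytope n a) F) :
    IsTeslerTableau n a (fun i j => if ∀ x ∈ F, x i j = 0 then 0 else 1) :=
  isTeslerTableau_supportTableau hface.subset hne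
end

section
/- Let a = (a_1,…,a_n) be a vector of nonnegative integers. The support map φ, sending a face F of Tes_n(a) to the tableau φ(F) defined by φ(F)(i,j) = 0 if every point of F satisfies x_{i,j} = 0 and φ(F)(i,j) = 1 otherwise, is an order isomorphism from the poset of faces of Tes_n(a) ordered by inclusion onto the poset of a-Tesler tableaux ordered componentwise. Moreover, for every face F, the affine dimension of F equals dim(φ(F)). -/
open Finset
open scoped Classical

/-- The support tableau of a subset `F` of the Tesler polytope: a `0` in position
`(i,j)` if `x_{i,j} = 0` holds on all of `F`, and a `1` otherwise. -/
noncomputable def suppTab (n : ℕ) (F : Set (Fin n → Fin n → ℝ)) : Fin n → Fin n → ℕ :=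
  fun i j => if ∀ x ∈ F, x i j = 0 then 0 else 1


/-!
Read `x i j` for `i < j` as a flow along the edge `i → j` and `x i i` as the flow leaving the
network at `i`: then `Tes_n(a)` is the flow polytope with supply `a k` at vertex `k`.

A face `F` contains a point `z` positive on the whole support of `F`; any point `y` of the
polytope with that support satisfies `z + ε (z - y) ∈ Tes_n(a)` for small `ε > 0`, so `y ∈ F`
since `F` is extreme. Hence `F` is the set of points vanishing off its support, and the support
determines the face. The tableau axioms are flow conservation for supports. Conversely, for an
`a`-Tesler tableau `T`, letting every vertex split its supply plus inflow evenly along the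
edges of `T` gives a flow with support exactly `T`, so the face of points vanishing off `T` has
support `T`. The direction of that face is the space of circulations supported on `T`; fixing
in each nonzero row a pivot entry that absorbs the inflow of the row, the other entries of `T`
are free coordinates, which gives the dimension `∑ i (r_i - 1)`.
-/

theorem Convex.exists_mem_forall_pos {E ι : Type*} [AddCommGroup E] [Module ℝ E] {s : Set E}
    (hs : Convex ℝ s) (hne : s.Nonempty) (f : ι → E →ₗ[ℝ] ℝ) (S : Finset ι)
    (hnonneg : ∀ i ∈ S, ∀ x ∈ s, 0 ≤ f i x) (hpos : ∀ i ∈ S, ∃ x ∈ s, 0 < f i x) :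
    ∃ z ∈ s, ∀ i ∈ S, 0 < f i z := by
  induction S using Finset.induction_on with
  | empty =>
    obtain ⟨z, hz⟩ := hne
    exact ⟨z, hz, by simp⟩
  | insert i S _ ih =>
    obtain ⟨z, hz, hzpos⟩ := ih (fun j hj => hnonneg j (mem_insert_of_mem hj))
      (fun j hj => hpos j (mem_insert_of_mem hj))
    obtain ⟨x, hx, hxpos⟩ := hpos i (mem_insert_self i S)
    refine ⟨(1 / 2 : ℝ) • z + (1 / 2 : ℝ) • x,
      hs hz hx (by norm_num) (by norm_num) (by norm_num), ?_⟩
    simp only [mem_insert, forall_eq_or_imp, map_add, map_smul, smul_eq_mul]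
    refine ⟨by linarith [hnonneg i (mem_insert_self i S) z hz], fun j hj => ?_⟩
    linarith [hzpos j hj, hnonneg j (mem_insert_of_mem hj) x hx]

theorem isExposed_setOf_forall_eq_zero_s8 {E ι : Type*} [AddCommGroup E] [Module ℝ E]
    [TopologicalSpace E] {A : Set E} (f : ι → StrongDual ℝ E) (S : Finset ι)
    (hnonneg : ∀ i ∈ S, ∀ x ∈ A, 0 ≤ f i x) :
    IsExposed ℝ A {x ∈ A | ∀ i ∈ S, f i x = 0} := by
  rintro ⟨x₀, hx₀A, hx₀⟩
  have hsum : ∀ x ∈ A, (∑ i ∈ S, f i x = 0 ↔ ∀ i ∈ S, f i x = 0) := fun x hx =>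
    sum_eq_zero_iff_of_nonneg fun i hi => hnonneg i hi x hx
  have hle : ∀ x ∈ A, 0 ≤ ∑ i ∈ S, f i x := fun x hx =>
    sum_nonneg fun i hi => hnonneg i hi x hx
  have hl : ∀ x, (-∑ i ∈ S, f i) x = -∑ i ∈ S, f i x := fun x => by simp
  refine ⟨-∑ i ∈ S, f i, Set.ext fun x => ⟨fun ⟨hxA, hx⟩ => ⟨hxA, fun y hy => ?_⟩,
    fun ⟨hxA, hx⟩ => ⟨hxA, (hsum x hxA).mp ?_⟩⟩⟩
  · rw [hl, hl, (hsum x hxA).mpr hx, neg_zero, neg_nonpos]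
    exact hle y hy
  · have := hx x₀ hx₀A
    rw [hl, hl, (hsum x₀ hx₀A).mpr hx₀, neg_zero, neg_nonneg] at this
    exact le_antisymm this (hle x hxA)

theorem IsExtreme.mem_of_add_smul_sub_mem {E : Type*} [AddCommGroup E] [Module ℝ E]
    {A B : Set E} {x y : E} {ε : ℝ} (hAB : IsExtreme ℝ A B) (hx : x ∈ B) (hy : y ∈ A)
    (hε : 0 < ε) (hw : x + ε • (x - y) ∈ A) : y ∈ B := by
  refine hAB.left_mem_of_mem_openSegment hy hw hx
    ⟨ε / (1 + ε), 1 / (1 + ε), by positivity, by positivity, by field_simp; ring, ?_⟩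
  match_scalars <;> field_simp; ring

namespace IsTeslerTableau

variable {n : ℕ} {a : Fin n → ℕ} {T : Fin n → Fin n → ℕ} {i j k : Fin n}

theorem le_of_eq_one (hT : IsTeslerTableau n a T) (h : T i j = 1) : i ≤ j :=
  by_contra fun hij => by simp [hT.1 i j hij] at h

theorem eq_zero_of_ne_one (hT : IsTeslerTableau n a T) (h : T i j ≠ 1) : T i j = 0 := by
  have := hT.2.1 i j
  omega

theorem exists_eq_one_of_pos (hT : IsTeslerTableau n a T) (ha : 0 < a i) : ∃ j, T i j = 1 :=
  let ⟨j, _, h⟩ := hT.2.2.1 i ha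
  ⟨j, h⟩

theorem exists_eq_one_of_lt (hT : IsTeslerTableau n a T) (hij : i < j) (h : T i j = 1) :
    ∃ k, T j k = 1 :=
  let ⟨k, _, h⟩ := hT.2.2.2.1 i j hij h
  ⟨k, h⟩

theorem exists_lt_eq_one (hT : IsTeslerTableau n a T) (ha : a j = 0) (h : T j k = 1) :
    ∃ i, i < j ∧ T i j = 1 := by
  by_contra hcol
  push Not at hcol
  have := hT.2.2.2.2 j ha (fun i hi => hT.eq_zero_of_ne_one (hcol i hi)) k (hT.le_of_eq_one h)
  simp [this] at h

end IsTeslerTableau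

namespace Tesler

variable {n : ℕ} {a : Fin n → ℕ} {T : Fin n → Fin n → ℕ} {F : Set (Fin n → Fin n → ℝ)}
  {x : Fin n → Fin n → ℝ}

def inflow (x : Fin n → Fin n → ℝ) (k : Fin n) : ℝ :=
  ∑ i ∈ univ.filter (fun i => i < k), x i k

def outflow (x : Fin n → Fin n → ℝ) (k : Fin n) : ℝ :=
  ∑ j ∈ univ.filter (fun j => k ≤ j), x k j

def hookSum (k : Fin n) : (Fin n → Fin n → ℝ) →ₗ[ℝ] ℝ where
  toFun x := outflow x k - inflow x k
  map_add' x y := by simp only [outflow, inflow, Pi.add_apply, sum_add_distrib]; ring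
  map_smul' c x := by
    simp only [outflow, inflow, Pi.smul_apply, smul_eq_mul, ← mul_sum, RingHom.id_apply]; ring

theorem nonneg_of_mem (hx : x ∈ TeslerPolytope n a) (i j : Fin n) : 0 ≤ x i j := by
  rcases lt_or_ge j i with h | h
  · exact (hx.1 i j h).ge
  · exact hx.2.1 i j h

theorem hookSum_eq_of_mem (hx : x ∈ TeslerPolytope n a) (k : Fin n) : hookSum k x = a k :=
  hx.2.2 k

theorem outflow_eq_of_mem (hx : x ∈ TeslerPolytope n a) (k : Fin n) :
    outflow x k = a k + inflow x k :=
  sub_eq_iff_eq_add.mp (hookSum_eq_of_mem hx k)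

theorem exists_outflow_ne_zero_iff (hx : x ∈ TeslerPolytope n a) (k : Fin n) :
    (∃ j, k ≤ j ∧ x k j ≠ 0) ↔ a k ≠ 0 ∨ ∃ i, i < k ∧ x i k ≠ 0 := by
  have hout : outflow x k = 0 ↔ ∀ j, k ≤ j → x k j = 0 := by
    rw [outflow, sum_eq_zero_iff_of_nonneg fun j _ => nonneg_of_mem hx k j]; simp
  have hin : inflow x k = 0 ↔ ∀ i, i < k → x i k = 0 := by
    rw [inflow, sum_eq_zero_iff_of_nonneg fun i _ => nonneg_of_mem hx i k]; simp
  have hsum : (a k : ℝ) + inflow x k = 0 ↔ (a k : ℝ) = 0 ∧ inflow x k = 0 :=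
    add_eq_zero_iff_of_nonneg (Nat.cast_nonneg _) (sum_nonneg fun i _ => nonneg_of_mem hx i k)
  rw [← not_iff_not]
  push Not
  rw [← hout, outflow_eq_of_mem hx, hsum, hin, Nat.cast_eq_zero]

theorem convex_teslerPolytope : Convex ℝ (TeslerPolytope n a) := by
  intro x hx y hy s t hs ht hst
  refine ⟨fun i j h => ?_, fun i j h => ?_, fun k => ?_⟩
  · simp [hx.1 i j h, hy.1 i j h]
  · simpa using add_nonneg (mul_nonneg hs (hx.2.1 i j h)) (mul_nonneg ht (hy.2.1 i j h))
  · change hookSum k (s • x + t • y) = a k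
    rw [map_add, map_smul, map_smul, hookSum_eq_of_mem hx, hookSum_eq_of_mem hy, smul_eq_mul,
      smul_eq_mul, ← add_mul, hst, one_mul]

theorem suppTab_eq_zero_iff {i j : Fin n} : suppTab n F i j = 0 ↔ ∀ x ∈ F, x i j = 0 := by
  unfold suppTab; split_ifs <;> simp_all

theorem suppTab_eq_one_iff {i j : Fin n} : suppTab n F i j = 1 ↔ ∃ x ∈ F, x i j ≠ 0 := by
  unfold suppTab; split_ifs <;> simp_all

theorem suppTab_le_one (i j : Fin n) : suppTab n F i j ≤ 1 := by
  unfold suppTab; split_ifs <;> simp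

theorem isTeslerTableau_suppTab (hF : F.Nonempty) (hFP : F ⊆ TeslerPolytope n a) :
    IsTeslerTableau n a (suppTab n F) := by
  obtain ⟨x₀, hx₀⟩ := hF
  refine ⟨fun i j hij => suppTab_eq_zero_iff.mpr fun x hx => (hFP hx).1 i j (not_le.mp hij),
    suppTab_le_one, fun i hi => ?_, fun i j hij h => ?_, fun j hj hcol k hjk => ?_⟩
  · obtain ⟨j, hij, hx⟩ := (exists_outflow_ne_zero_iff (hFP hx₀) i).mpr (Or.inl hi.ne')
    exact ⟨j, hij, suppTab_eq_one_iff.mpr ⟨x₀, hx₀, hx⟩⟩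
  · obtain ⟨x, hx, hxij⟩ := suppTab_eq_one_iff.mp h
    obtain ⟨k, hjk, hxjk⟩ := (exists_outflow_ne_zero_iff (hFP hx) j).mpr (Or.inr ⟨i, hij, hxij⟩)
    exact ⟨k, hjk, suppTab_eq_one_iff.mpr ⟨x, hx, hxjk⟩⟩
  · refine suppTab_eq_zero_iff.mpr fun x hx => ?_
    by_contra hxjk
    obtain h | ⟨i, hij, hxij⟩ := (exists_outflow_ne_zero_iff (hFP hx) j).mp ⟨k, hjk, hxjk⟩
    · exact h hj
    · exact hxij (suppTab_eq_zero_iff.mp (hcol i hij) x hx)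

def entry (i j : Fin n) : (Fin n → Fin n → ℝ) →L[ℝ] ℝ :=
  (ContinuousLinearMap.proj j : (Fin n → ℝ) →L[ℝ] ℝ).comp (ContinuousLinearMap.proj i)

@[simp]
theorem entry_apply (i j : Fin n) (x : Fin n → Fin n → ℝ) : entry i j x = x i j := rfl

def face (a : Fin n → ℕ) (T : Fin n → Fin n → ℕ) : Set (Fin n → Fin n → ℝ) :=
  {x ∈ TeslerPolytope n a | ∀ i j, T i j = 0 → x i j = 0}

theorem isExposed_face (a : Fin n → ℕ) (T : Fin n → Fin n → ℕ) :
    IsExposed ℝ (TeslerPolytope n a) (face a T) := by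
  have hface : face a T = {x ∈ TeslerPolytope n a |
      ∀ p ∈ univ.filter fun p : Fin n × Fin n => T p.1 p.2 = 0, entry p.1 p.2 x = 0} := by
    ext x
    simp [face]
  rw [hface]
  exact isExposed_setOf_forall_eq_zero_s8 _ _ fun p _ x hx => nonneg_of_mem hx p.1 p.2

theorem exists_mem_forall_pos_of_suppTab_ne_zero (hF : F.Nonempty) (hconv : Convex ℝ F)
    (hFP : F ⊆ TeslerPolytope n a) : ∃ z ∈ F, ∀ i j, suppTab n F i j ≠ 0 → 0 < z i j := by
  have hsupp : ∀ p ∈ univ.filter fun p : Fin n × Fin n => suppTab n F p.1 p.2 ≠ 0,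
      ∃ x ∈ F, 0 < entry p.1 p.2 x := fun p hp => by
    obtain ⟨x, hx, hne⟩ : ∃ x ∈ F, x p.1 p.2 ≠ 0 := by
      simpa [suppTab_eq_zero_iff] using (mem_filter.mp hp).2
    exact ⟨x, hx, (nonneg_of_mem (hFP hx) _ _).lt_of_ne' hne⟩
  obtain ⟨z, hz, hpos⟩ := hconv.exists_mem_forall_pos hF
    (fun p : Fin n × Fin n => (entry p.1 p.2 : (Fin n → Fin n → ℝ) →ₗ[ℝ] ℝ)) _
    (fun p _ x hx => nonneg_of_mem (hFP hx) _ _) hsupp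
  exact ⟨z, hz, fun i j h => hpos (i, j) (by simpa using h)⟩

open Filter Topology in
theorem exists_pos_add_smul_mem {z v : Fin n → Fin n → ℝ} (hz : z ∈ TeslerPolytope n a)
    (hv : ∀ k, hookSum k v = 0) (hsupp : ∀ i j, v i j ≠ 0 → 0 < z i j) :
    ∃ ε : ℝ, 0 < ε ∧ z + ε • v ∈ TeslerPolytope n a := by
  have hnear : ∀ᶠ ε in 𝓝[>] (0 : ℝ), ∀ i j, 0 ≤ z i j + ε * v i j := by
    simp only [Filter.eventually_all]
    intro i j
    by_cases h : v i j = 0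
    · simp [h, nonneg_of_mem hz i j]
    · have hlim : Tendsto (fun ε => z i j + ε * v i j) (𝓝 0) (𝓝 (z i j)) :=
        (continuous_const.add (continuous_id.mul continuous_const)).tendsto' _ _ (by simp)
      exact nhdsWithin_le_nhds <| (hlim.eventually (lt_mem_nhds (hsupp i j h))).mono
        fun _ => le_of_lt
  obtain ⟨ε, hε, hε₀⟩ := (hnear.and self_mem_nhdsWithin).exists
  refine ⟨ε, hε₀, fun i j hij => ?_, fun i j _ => hε i j, fun k => ?_⟩
  · have hv0 : v i j = 0 := by_contra fun h => (hsupp i j h).ne' (hz.1 i j hij)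
    simp [hz.1 i j hij, hv0]
  · change hookSum k (z + ε • v) = a k
    rw [map_add, map_smul, hv, hookSum_eq_of_mem hz, smul_zero, add_zero]

theorem eq_face_suppTab (hF : F.Nonempty) (hexp : IsExposed ℝ (TeslerPolytope n a) F) :
    F = face a (suppTab n F) := by
  refine Set.Subset.antisymm
    (fun x hx => ⟨hexp.subset hx, fun i j h => suppTab_eq_zero_iff.mp h x hx⟩) ?_
  rintro y ⟨hy, hy0⟩
  obtain ⟨z, hz, hzpos⟩ := exists_mem_forall_pos_of_suppTab_ne_zero hF
    (hexp.convex convex_teslerPolytope) hexp.subset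
  obtain ⟨ε, hε, hw⟩ := exists_pos_add_smul_mem (v := z - y) (hexp.subset hz)
    (fun k => by rw [map_sub, hookSum_eq_of_mem (hexp.subset hz), hookSum_eq_of_mem hy, sub_self])
    fun i j h => hzpos i j fun h0 => h (by simp [suppTab_eq_zero_iff.mp h0 z hz, hy0 i j h0])
  exact hexp.isExtreme.mem_of_add_smul_sub_mem hz hy hε hw

theorem subset_iff_suppTab_le {F₁ F₂ : Set (Fin n → Fin n → ℝ)}
    (hF₁ : F₁ ⊆ TeslerPolytope n a) (hF₂ : F₂.Nonempty)
    (hexp₂ : IsExposed ℝ (TeslerPolytope n a) F₂) :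
    F₁ ⊆ F₂ ↔ ∀ i j, suppTab n F₁ i j ≤ suppTab n F₂ i j := by
  refine ⟨fun h i j => ?_, fun hle x hx => ?_⟩
  · by_cases h₂ : suppTab n F₂ i j = 0
    · rw [h₂, Nat.le_zero, suppTab_eq_zero_iff]
      exact fun x hx => suppTab_eq_zero_iff.mp h₂ x (h hx)
    · have := suppTab_le_one (F := F₁) i j
      omega
  · rw [eq_face_suppTab hF₂ hexp₂]
    exact ⟨hF₁ hx, fun i j h => suppTab_eq_zero_iff.mp (Nat.le_zero.mp (h ▸ hle i j)) x hx⟩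

def rowOnes (T : Fin n → Fin n → ℕ) (i : Fin n) : Finset (Fin n) :=
  univ.filter fun j => T i j = 1

theorem outflow_eq_sum_rowOnes (hT : IsTeslerTableau n a T) (hx : ∀ i j, T i j ≠ 1 → x i j = 0)
    (k : Fin n) : outflow x k = ∑ j ∈ rowOnes T k, x k j := by
  refine (sum_subset (fun j hj => ?_) fun j _ hj => hx k j ?_).symm
  · simpa using hT.le_of_eq_one (mem_filter.mp hj).2
  · simpa [rowOnes] using hj

theorem inflow_eq_zero_of_forall_ne_one (hT : IsTeslerTableau n a T)
    (hx : ∀ i j, T i j ≠ 1 → x i j = 0) {k : Fin n} (hk : ∀ j, T k j ≠ 1) : inflow x k = 0 :=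
  sum_eq_zero fun i hi => hx i k fun h =>
    let ⟨j, hj⟩ := hT.exists_eq_one_of_lt (mem_filter.mp hi).2 h
    hk j hj

def forwardFill (row : Fin n → ℝ → Fin n → ℝ) : Fin n → Fin n → ℝ
  | i => row i (∑ p ∈ (univ.filter (· < i)).attach, forwardFill row p.1 i)
termination_by i => i
decreasing_by exact (mem_filter.mp p.2).2

theorem forwardFill_apply (row : Fin n → ℝ → Fin n → ℝ) (i : Fin n) :
    forwardFill row i = row i (inflow (forwardFill row) i) := by
  rw [forwardFill]
  exact congrArg _ (sum_attach _ fun j => forwardFill row j i)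

noncomputable def uniformFlow (a : Fin n → ℕ) (T : Fin n → Fin n → ℕ) : Fin n → Fin n → ℝ :=
  forwardFill fun i c j => if T i j = 1 then (a i + c) / #(rowOnes T i) else 0

theorem uniformFlow_apply (i j : Fin n) : uniformFlow a T i j =
    if T i j = 1 then (a i + inflow (uniformFlow a T) i) / #(rowOnes T i) else 0 := by
  rw [uniformFlow, forwardFill_apply]

theorem uniformFlow_eq_zero {i j : Fin n} (h : T i j ≠ 1) : uniformFlow a T i j = 0 := by
  simp [uniformFlow_apply, h]

theorem card_rowOnes_pos {i j : Fin n} (h : T i j = 1) : 0 < #(rowOnes T i) :=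
  card_pos.mpr ⟨j, by simp [rowOnes, h]⟩

theorem supply_add_inflow_uniformFlow (hT : IsTeslerTableau n a T) (i : Fin n) :
    0 ≤ a i + inflow (uniformFlow a T) i ∧
      ((∃ j, T i j = 1) → 0 < a i + inflow (uniformFlow a T) i) := by
  induction i using WellFoundedLT.induction with
  | ind i ih =>
  have hx : ∀ i' < i, ∀ j, 0 ≤ uniformFlow a T i' j := fun i' hi' j => by
    rw [uniformFlow_apply]
    split_ifs
    exacts [div_nonneg (ih i' hi').1 (Nat.cast_nonneg _), le_rfl]
  have hin : 0 ≤ inflow (uniformFlow a T) i :=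
    sum_nonneg fun i' hi' => hx i' (mem_filter.mp hi').2 i
  refine ⟨by positivity, fun ⟨j, hj⟩ => ?_⟩
  rcases Nat.eq_zero_or_pos (a i) with ha | ha
  · obtain ⟨i', hi', hT'⟩ := hT.exists_lt_eq_one ha hj
    have hpos : 0 < uniformFlow a T i' i := by
      rw [uniformFlow_apply, if_pos hT']
      exact div_pos ((ih i' hi').2 ⟨i, hT'⟩) (Nat.cast_pos.mpr (card_rowOnes_pos hT'))
    have hle : uniformFlow a T i' i ≤ inflow (uniformFlow a T) i :=
      single_le_sum (fun i'' hi'' => hx i'' (mem_filter.mp hi'').2 i) (by simp [hi'])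
    linarith
  · have : (0 : ℝ) < a i := Nat.cast_pos.mpr ha
    linarith

theorem uniformFlow_nonneg (hT : IsTeslerTableau n a T) (i j : Fin n) :
    0 ≤ uniformFlow a T i j := by
  rw [uniformFlow_apply]
  split_ifs
  exacts [div_nonneg (supply_add_inflow_uniformFlow hT i).1 (Nat.cast_nonneg _), le_rfl]

theorem uniformFlow_pos (hT : IsTeslerTableau n a T) {i j : Fin n} (h : T i j = 1) :
    0 < uniformFlow a T i j := by
  rw [uniformFlow_apply, if_pos h]
  exact div_pos ((supply_add_inflow_uniformFlow hT i).2 ⟨j, h⟩)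
    (Nat.cast_pos.mpr (card_rowOnes_pos h))

theorem uniformFlow_mem_face (hT : IsTeslerTableau n a T) : uniformFlow a T ∈ face a T := by
  have hx : ∀ i j, T i j ≠ 1 → uniformFlow a T i j = 0 := fun i j => uniformFlow_eq_zero
  refine ⟨⟨fun i j hij => hx i j (by simp [hT.1 i j (not_le.mpr hij)]),
    fun i j _ => uniformFlow_nonneg hT i j, fun k => ?_⟩, fun i j h => hx i j (by simp [h])⟩
  change outflow (uniformFlow a T) k - inflow (uniformFlow a T) k = a k
  rw [outflow_eq_sum_rowOnes hT hx]
  rcases (rowOnes T k).eq_empty_or_nonempty with hk | hk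
  · have hk : ∀ j, T k j ≠ 1 := fun j hj =>
      eq_empty_iff_forall_notMem.mp hk j (by simp [rowOnes, hj])
    have ha : a k = 0 := Nat.eq_zero_of_not_pos fun ha =>
      let ⟨j, hj⟩ := hT.exists_eq_one_of_pos ha
      hk j hj
    simp [rowOnes, hk, ha, inflow_eq_zero_of_forall_ne_one hT hx hk]
  · rw [sum_congr rfl fun j hj => by rw [uniformFlow_apply, if_pos (mem_filter.mp hj).2],
      sum_const, nsmul_eq_mul, mul_div_cancel₀ _ (Nat.cast_ne_zero.mpr hk.card_pos.ne')]
    ring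

theorem suppTab_face (hT : IsTeslerTableau n a T) : suppTab n (face a T) = T := by
  funext i j
  rcases Nat.le_one_iff_eq_zero_or_eq_one.mp (hT.2.1 i j) with h | h
  · rw [h, suppTab_eq_zero_iff]
    exact fun x hx => hx.2 i j h
  · rw [h, suppTab_eq_one_iff]
    exact ⟨_, uniformFlow_mem_face hT, (uniformFlow_pos hT h).ne'⟩

def tangentSpace (T : Fin n → Fin n → ℕ) : Submodule ℝ (Fin n → Fin n → ℝ) where
  carrier := {v | (∀ i j, T i j = 0 → v i j = 0) ∧ ∀ k, hookSum k v = 0}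
  add_mem' hv hw := ⟨fun i j h => by simp [hv.1 i j h, hw.1 i j h],
    fun k => by rw [map_add, hv.2 k, hw.2 k, add_zero]⟩
  zero_mem' := ⟨fun _ _ _ => rfl, fun k => map_zero _⟩
  smul_mem' c v hv := ⟨fun i j h => by simp [hv.1 i j h],
    fun k => by rw [map_smul, hv.2 k, smul_zero]⟩

theorem vectorSpan_eq_tangentSpace (hF : F.Nonempty)
    (hexp : IsExposed ℝ (TeslerPolytope n a) F) :
    vectorSpan ℝ F = tangentSpace (suppTab n F) := by
  refine le_antisymm (Submodule.span_le.mpr ?_) fun v hv => ?_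
  · rintro _ ⟨x, hx, y, hy, rfl⟩
    exact ⟨fun i j h => by simp [suppTab_eq_zero_iff.mp h x hx, suppTab_eq_zero_iff.mp h y hy],
      fun k => by
        change hookSum k (x - y) = 0
        rw [map_sub, hookSum_eq_of_mem (hexp.subset hx), hookSum_eq_of_mem (hexp.subset hy),
          sub_self]⟩
  · obtain ⟨z, hz, hzpos⟩ := exists_mem_forall_pos_of_suppTab_ne_zero hF
      (hexp.convex convex_teslerPolytope) hexp.subset
    obtain ⟨ε, hε, hw⟩ := exists_pos_add_smul_mem (hexp.subset hz) hv.2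
      fun i j h => hzpos i j fun h0 => h (hv.1 i j h0)
    have hwF : z + ε • v ∈ F := by
      rw [eq_face_suppTab hF hexp]
      exact ⟨hw, fun i j h => by simp [suppTab_eq_zero_iff.mp h z hz, hv.1 i j h]⟩
    have := vsub_mem_vectorSpan ℝ hwF hz
    rw [vsub_eq_sub, add_sub_cancel_left] at this
    simpa [hε.ne'] using Submodule.smul_mem _ ε⁻¹ this

noncomputable def pivot (T : Fin n → Fin n → ℕ) (i : Fin n) : Fin n :=
  if h : ∃ j, T i j = 1 then h.choose else i

theorem pivot_mem_rowOnes {i : Fin n} (h : ∃ j, T i j = 1) : pivot T i ∈ rowOnes T i := by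
  simp [pivot, h, rowOnes, h.choose_spec]

theorem le_pivot (hT : IsTeslerTableau n a T) (i : Fin n) : i ≤ pivot T i := by
  by_cases h : ∃ j, T i j = 1
  · exact hT.le_of_eq_one (mem_filter.mp (pivot_mem_rowOnes h)).2
  · simp [pivot, h]

noncomputable def freeCells (T : Fin n → Fin n → ℕ) (i : Fin n) : Finset (Fin n) :=
  (rowOnes T i).erase (pivot T i)

theorem card_freeCells (T : Fin n → Fin n → ℕ) (i : Fin n) :
    #(freeCells T i) = #(rowOnes T i) - 1 := by
  rw [freeCells, card_erase_eq_ite]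
  split_ifs with h
  · rfl
  · have : rowOnes T i = ∅ := eq_empty_of_forall_notMem fun j hj =>
      h (pivot_mem_rowOnes ⟨j, (mem_filter.mp hj).2⟩)
    simp [this]

noncomputable def restrictFree (T : Fin n → Fin n → ℕ) :
    tangentSpace T →ₗ[ℝ] ((i : Fin n) → freeCells T i → ℝ) where
  toFun v i j := (v : Fin n → Fin n → ℝ) i j
  map_add' _ _ := rfl
  map_smul' _ _ := rfl

theorem restrictFree_injective (hT : IsTeslerTableau n a T) :
    Function.Injective (restrictFree T) := by
  rw [← LinearMap.ker_eq_bot, LinearMap.ker_eq_bot']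
  rintro ⟨v, hv⟩ h0
  suffices ∀ i j, v i j = 0 from Subtype.ext (funext fun i => funext (this i))
  intro i
  induction i using WellFoundedLT.induction with
  | ind i ih =>
  have hrow : ∀ j, j ≠ pivot T i → v i j = 0 := fun j hj => by
    by_cases h : T i j = 1
    · exact congrFun (congrFun h0 i) ⟨j, mem_erase.mpr ⟨hj, by simp [rowOnes, h]⟩⟩
    · exact hv.1 i j (hT.eq_zero_of_ne_one h)
  have hin : inflow v i = 0 := sum_eq_zero fun i' hi' => ih i' (mem_filter.mp hi').2 i
  have hout : outflow v i = v i (pivot T i) :=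
    sum_eq_single_of_mem _ (by simpa using le_pivot hT i) fun j _ => hrow j
  have hpivot : v i (pivot T i) = 0 := by
    have := hv.2 i
    change outflow v i - inflow v i = 0 at this
    rwa [hin, hout, sub_zero] at this
  intro j
  by_cases hj : j = pivot T i
  · rw [hj, hpivot]
  · exact hrow j hj

noncomputable def completeFree (T : Fin n → Fin n → ℕ) (g : Fin n → Fin n → ℝ) :
    Fin n → Fin n → ℝ :=
  forwardFill fun i c j =>
    if T i j = 1 then if j = pivot T i then c - ∑ j' ∈ freeCells T i, g i j' else g i j else 0

theorem completeFree_apply (g : Fin n → Fin n → ℝ) (i j : Fin n) : completeFree T g i j =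
    if T i j = 1 then
      if j = pivot T i then inflow (completeFree T g) i - ∑ j' ∈ freeCells T i, g i j'
      else g i j
    else 0 := by
  rw [completeFree, forwardFill_apply]

theorem completeFree_of_mem_freeCells (g : Fin n → Fin n → ℝ) {i j : Fin n}
    (h : j ∈ freeCells T i) : completeFree T g i j = g i j := by
  obtain ⟨hj, hT⟩ := mem_erase.mp h
  rw [completeFree_apply, if_pos (mem_filter.mp hT).2, if_neg hj]

theorem completeFree_mem (hT : IsTeslerTableau n a T) (g : Fin n → Fin n → ℝ) :
    completeFree T g ∈ tangentSpace T := by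
  have hx : ∀ i j, T i j ≠ 1 → completeFree T g i j = 0 := fun i j h => by
    rw [completeFree_apply, if_neg h]
  refine ⟨fun i j h => hx i j (by simp [h]), fun k => ?_⟩
  change outflow (completeFree T g) k - inflow (completeFree T g) k = 0
  rw [outflow_eq_sum_rowOnes hT hx]
  by_cases hk : ∃ j, T k j = 1
  · have hsplit : ∑ j ∈ rowOnes T k, completeFree T g k j = completeFree T g k (pivot T k) +
        ∑ j ∈ freeCells T k, completeFree T g k j :=
      (add_sum_erase _ _ (pivot_mem_rowOnes hk)).symm
    rw [hsplit, completeFree_apply,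
      if_pos (mem_filter.mp (pivot_mem_rowOnes hk)).2, if_pos rfl,
      sum_congr rfl fun j hj => completeFree_of_mem_freeCells g hj]
    ring
  · push Not at hk
    have : rowOnes T k = ∅ := eq_empty_of_forall_notMem fun j hj => hk j (mem_filter.mp hj).2
    simp [this, inflow_eq_zero_of_forall_ne_one hT hx hk]

theorem finrank_tangentSpace (hT : IsTeslerTableau n a T) :
    Module.finrank ℝ (tangentSpace T) = tabDim n T := by
  have hsurj : Function.Surjective (restrictFree T) := fun f => by
    let g : Fin n → Fin n → ℝ := fun i j => if h : j ∈ freeCells T i then f i ⟨j, h⟩ else 0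
    refine ⟨⟨completeFree T g, completeFree_mem hT g⟩, funext fun i => funext fun j => ?_⟩
    exact (completeFree_of_mem_freeCells g j.2).trans (dif_pos j.2)
  rw [(LinearEquiv.ofBijective _ ⟨restrictFree_injective hT, hsurj⟩).finrank_eq,
    Module.finrank_pi_fintype]
  simp [Module.finrank_fintype_fun_eq_card, card_freeCells, tabDim, rowOnes]

end Tesler

open Tesler in
/-- The support map `φ : F ↦ suppTab F` is an isomorphism from the poset of
(nonempty, exposed) faces of `Tes_n(a)`, ordered by inclusion, onto the poset of
`a`-Tesler tableaux ordered componentwise; moreover it sends the affine dimension of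
a face to the dimension of the corresponding tableau. -/
theorem face_poset_isomorphism (n : ℕ) (a : Fin n → ℕ) :
    (∀ F : Set (Fin n → Fin n → ℝ), F.Nonempty → IsExposed ℝ (TeslerPolytope n a) F →
      IsTeslerTableau n a (suppTab n F)) ∧
    Set.BijOn (suppTab n)
      {F : Set (Fin n → Fin n → ℝ) | F.Nonempty ∧ IsExposed ℝ (TeslerPolytope n a) F}
      {T : Fin n → Fin n → ℕ | IsTeslerTableau n a T} ∧
    (∀ F₁ F₂ : Set (Fin n → Fin n → ℝ),
      (F₁.Nonempty ∧ IsExposed ℝ (TeslerPolytope n a) F₁) →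
      (F₂.Nonempty ∧ IsExposed ℝ (TeslerPolytope n a) F₂) →
      (F₁ ⊆ F₂ ↔ ∀ i j : Fin n, suppTab n F₁ i j ≤ suppTab n F₂ i j)) ∧
    (∀ F : Set (Fin n → Fin n → ℝ), F.Nonempty → IsExposed ℝ (TeslerPolytope n a) F →
      Module.finrank ℝ (affineSpan ℝ F).direction = tabDim n (suppTab n F)) := by
  have tableau : ∀ F : Set (Fin n → Fin n → ℝ), F.Nonempty →
      IsExposed ℝ (TeslerPolytope n a) F → IsTeslerTableau n a (suppTab n F) :=
    fun F hF hexp => isTeslerTableau_suppTab hF hexp.subset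
  refine ⟨tableau, ⟨fun F hF => tableau F hF.1 hF.2, ?_, ?_⟩, ?_, ?_⟩
  · rintro F₁ ⟨hF₁, hexp₁⟩ F₂ ⟨hF₂, hexp₂⟩ h
    rw [eq_face_suppTab hF₁ hexp₁, eq_face_suppTab hF₂ hexp₂, h]
  · intro T hT
    exact ⟨face a T, ⟨⟨_, uniformFlow_mem_face hT⟩, isExposed_face a T⟩, suppTab_face hT⟩
  · rintro F₁ F₂ ⟨-, hexp₁⟩ ⟨hF₂, hexp₂⟩
    exact subset_iff_suppTab_le hexp₁.subset hF₂ hexp₂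
  · intro F hF hexp
    rw [direction_affineSpan, vectorSpan_eq_tangentSpace hF hexp,
      finrank_tangentSpace (tableau F hF hexp)]
end

section
/- Let a = (a_1,…,a_n) be a vector of nonnegative integers with a_1 > 0. Then the Tesler polytope Tes_n(a) has affine dimension equal to the binomial coefficient C(n,2) = n(n−1)/2. -/
open Finset

/-! Differences of points of `Tes_n(a)` are upper triangular matrices with vanishing hook sums,
and such a matrix is determined by its strictly upper triangular entries (the hook sum condition
then fixes the diagonal), so the dimension is at most `n choose 2`. Conversely, for `i < j` the
matrix `E_ij + E_jj - E_ii`, which moves a unit along the edge `(i, j)`, has vanishing hook sums.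
Since `a₁ ≥ 1`, a unit can be routed from the corner `(1, 1)` to row `i` first, which realises
every such matrix as a difference of two points of `Tes_n(a)`; their strictly upper triangular
parts form the standard basis. -/

section

variable {n : ℕ}

def hookSums (n : ℕ) : (Fin n → Fin n → ℝ) →ₗ[ℝ] (Fin n → ℝ) where
  toFun x k :=
    (∑ j ∈ univ.filter (fun j => k ≤ j), x k j) -
      ∑ i ∈ univ.filter (fun i => i < k), x i k
  map_add' x y := by ext k; simp only [Pi.add_apply, sum_add_distrib]; ring
  map_smul' c x := by ext k; simp [mul_sum, mul_sub]

def upperTriangular (n : ℕ) : Submodule ℝ (Fin n → Fin n → ℝ) where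
  carrier := {x | ∀ i j, j < i → x i j = 0}
  zero_mem' _ _ _ := rfl
  add_mem' hx hy i j h := by simp [hx i j h, hy i j h]
  smul_mem' c x hx i j h := by simp [hx i j h]

def teslerDirections (n : ℕ) : Submodule ℝ (Fin n → Fin n → ℝ) :=
  upperTriangular n ⊓ LinearMap.ker (hookSums n)

theorem mem_teslerPolytope_iff_s9 {a : Fin n → ℕ} {x : Fin n → Fin n → ℝ} :
    x ∈ TeslerPolytope n a ↔
      x ∈ upperTriangular n ∧ 0 ≤ x ∧ hookSums n x = fun k => (a k : ℝ) := by
  refine and_congr_right fun hx =>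
    and_congr ⟨fun h i j => ?_, fun h i j _ => h i j⟩ funext_iff.symm
  rcases le_or_gt i j with hij | hij
  · exact h i j hij
  · exact (hx i j hij).ge

def matrixUnit (i j : Fin n) : Fin n → Fin n → ℝ := Pi.single i (Pi.single j 1)

theorem matrixUnit_apply (i j p q : Fin n) :
    matrixUnit i j p q = if p = i ∧ q = j then 1 else 0 := by
  by_cases hp : p = i <;> simp [matrixUnit, hp, Pi.single_apply]

theorem matrixUnit_nonneg (i j : Fin n) : 0 ≤ matrixUnit i j := by
  simp [matrixUnit]

theorem matrixUnit_mem_upperTriangular {i j : Fin n} (h : i ≤ j) :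
    matrixUnit i j ∈ upperTriangular n := by
  intro p q hqp
  rw [matrixUnit_apply, if_neg]
  rintro ⟨rfl, rfl⟩
  exact hqp.not_ge h

theorem hookSums_matrixUnit {i j : Fin n} (h : i ≤ j) (k : Fin n) :
    hookSums n (matrixUnit i j) k =
      (if k = i then 1 else 0) - if k = j ∧ i < j then 1 else 0 := by
  simp only [hookSums, LinearMap.coe_mk, AddHom.coe_mk, matrixUnit_apply, ite_and,
    sum_ite_eq', sum_ite_irrel, mem_filter, mem_univ, true_and]
  by_cases hki : k = i <;> by_cases hkj : k = j <;> simp_all [eq_comm]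

def transferMatrix (i j : Fin n) : Fin n → Fin n → ℝ :=
  matrixUnit i j + matrixUnit j j - matrixUnit i i

theorem transferMatrix_mem_teslerDirections {i j : Fin n} (h : i < j) :
    transferMatrix i j ∈ teslerDirections n := by
  refine ⟨?_, ?_⟩
  · exact sub_mem (add_mem (matrixUnit_mem_upperTriangular h.le)
      (matrixUnit_mem_upperTriangular le_rfl)) (matrixUnit_mem_upperTriangular le_rfl)
  · ext k
    simp only [transferMatrix, map_sub, map_add, Pi.sub_apply, Pi.add_apply,
      hookSums_matrixUnit h.le, hookSums_matrixUnit le_rfl, lt_irrefl, and_false, if_false, h,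
      and_true, Pi.zero_apply]
    ring

def diagonalOf (d : Fin n → ℝ) : Fin n → Fin n → ℝ := ∑ k, d k • matrixUnit k k

theorem diagonalOf_add (d e : Fin n → ℝ) :
    diagonalOf (d + e) = diagonalOf d + diagonalOf e := by
  simp [diagonalOf, add_smul, sum_add_distrib]

theorem diagonalOf_single (z : Fin n) : diagonalOf (Pi.single z 1) = matrixUnit z z := by
  simp [diagonalOf, Pi.single_apply, ite_smul]

theorem diagonalOf_nonneg {d : Fin n → ℝ} (hd : 0 ≤ d) : 0 ≤ diagonalOf d :=
  sum_nonneg fun k _ => smul_nonneg (hd k) (matrixUnit_nonneg k k)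

theorem diagonalOf_mem_teslerPolytope (a : Fin n → ℕ) :
    diagonalOf (fun k => (a k : ℝ)) ∈ TeslerPolytope n a := by
  refine mem_teslerPolytope_iff_s9.2 ⟨?_, diagonalOf_nonneg fun k => Nat.cast_nonneg _, ?_⟩
  · exact sum_mem fun k _ => Submodule.smul_mem _ _ (matrixUnit_mem_upperTriangular le_rfl)
  · ext k
    simp [diagonalOf, map_sum, hookSums_matrixUnit]

namespace TeslerPolytope

variable {a : Fin n → ℕ}

theorem sub_mem_teslerDirections {x y : Fin n → Fin n → ℝ} (hx : x ∈ TeslerPolytope n a)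
    (hy : y ∈ TeslerPolytope n a) : x - y ∈ teslerDirections n := by
  rw [mem_teslerPolytope_iff_s9] at hx hy
  exact ⟨sub_mem hx.1 hy.1, by simp [LinearMap.mem_ker, map_sub, hx.2.2, hy.2.2]⟩

theorem direction_affineSpan_le :
    (affineSpan ℝ (TeslerPolytope n a)).direction ≤ teslerDirections n := by
  rw [direction_affineSpan, vectorSpan_def, Submodule.span_le]
  rintro _ ⟨x, hx, y, hy, rfl⟩
  exact sub_mem_teslerDirections hx hy

theorem add_mem_of_mem_teslerDirections {x v : Fin n → Fin n → ℝ}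
    (hx : x ∈ TeslerPolytope n a) (hv : v ∈ teslerDirections n) (hxv : 0 ≤ x + v) :
    x + v ∈ TeslerPolytope n a := by
  rw [mem_teslerPolytope_iff_s9] at hx ⊢
  exact ⟨add_mem hx.1 hv.1, hxv, by rw [map_add, hx.2.2, LinearMap.mem_ker.1 hv.2, add_zero]⟩

theorem mem_direction_of_add_mem {x v : Fin n → Fin n → ℝ} (hx : x ∈ TeslerPolytope n a)
    (hxv : x + v ∈ TeslerPolytope n a) :
    v ∈ (affineSpan ℝ (TeslerPolytope n a)).direction := by
  simpa using AffineSubspace.vsub_mem_direction (subset_affineSpan ℝ _ hxv)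
    (subset_affineSpan ℝ _ hx)

/-- The witnesses are `diag(a) - E_zz + E_zi + E_ii` and `diag(a) - E_zz + E_zi + E_ij + E_jj`,
nonnegative because `a z ≥ 1`. -/
theorem transferMatrix_mem_direction {z i j : Fin n} (hz : 1 ≤ a z) (hzi : z ≤ i)
    (hij : i < j) :
    transferMatrix i j ∈ (affineSpan ℝ (TeslerPolytope n a)).direction := by
  set c := diagonalOf ((fun k => (a k : ℝ)) - Pi.single z 1)
  have hc : 0 ≤ c := by
    refine diagonalOf_nonneg fun k => ?_
    by_cases hk : k = z
    · subst hk
      simpa using hz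
    · simp [hk]
  have hx : c + matrixUnit z z ∈ TeslerPolytope n a := by
    rw [← diagonalOf_single, ← diagonalOf_add, sub_add_cancel]
    exact diagonalOf_mem_teslerPolytope a
  have hxz : ∀ {k}, z < k → c + matrixUnit z z + transferMatrix z k ∈ TeslerPolytope n a := by
    intro k hk
    refine add_mem_of_mem_teslerDirections hx (transferMatrix_mem_teslerDirections hk) ?_
    have : c + matrixUnit z z + transferMatrix z k = c + matrixUnit z k + matrixUnit k k := by
      simp only [transferMatrix]; abel
    rw [this]
    exact add_nonneg (add_nonneg hc (matrixUnit_nonneg _ _)) (matrixUnit_nonneg _ _)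
  rcases hzi.eq_or_lt with rfl | hzi
  · exact mem_direction_of_add_mem hx (hxz hij)
  · refine mem_direction_of_add_mem (hxz hzi)
      (add_mem_of_mem_teslerDirections (hxz hzi) (transferMatrix_mem_teslerDirections hij) ?_)
    have : c + matrixUnit z z + transferMatrix z i + transferMatrix i j =
        c + matrixUnit z i + matrixUnit i j + matrixUnit j j := by
      simp only [transferMatrix]; abel
    rw [this]
    exact add_nonneg (add_nonneg (add_nonneg hc (matrixUnit_nonneg _ _)) (matrixUnit_nonneg _ _))
      (matrixUnit_nonneg _ _)

end TeslerPolytope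

def strictUpperEntries (n : ℕ) :
    (Fin n → Fin n → ℝ) →ₗ[ℝ] ({p : Fin n × Fin n // p.1 < p.2} → ℝ) where
  toFun x p := x p.1.1 p.1.2
  map_add' _ _ := rfl
  map_smul' _ _ := rfl

theorem eq_zero_of_strictUpperEntries_eq_zero {v : Fin n → Fin n → ℝ}
    (hv : v ∈ teslerDirections n) (h : strictUpperEntries n v = 0) : v = 0 := by
  have hupper : ∀ i j, i < j → v i j = 0 := fun i j hij => congrFun h ⟨(i, j), hij⟩
  ext i j
  rcases lt_trichotomy i j with hij | rfl | hji
  · exact hupper i j hij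
  · have hk := congrFun (LinearMap.mem_ker.1 hv.2) i
    rw [hookSums, LinearMap.coe_mk, AddHom.coe_mk, sum_eq_single_of_mem i (by simp),
      sum_eq_zero fun k hk => hupper k i (by simpa using hk), sub_zero] at hk
    · exact hk
    · intro k hk hki
      exact hupper i k (lt_of_le_of_ne (by simpa using hk) (Ne.symm hki))
  · exact hv.1 i j hji

theorem strictUpperEntries_transferMatrix {i j : Fin n} (h : i < j) :
    strictUpperEntries n (transferMatrix i j) = Pi.single ⟨(i, j), h⟩ 1 := by
  ext ⟨⟨p, q⟩, hpq⟩
  have hdiag : ∀ k, ¬(p = k ∧ q = k) := fun k ⟨hp, hq⟩ => hpq.ne (hp.trans hq.symm)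
  simp [strictUpperEntries, transferMatrix, matrixUnit_apply, hdiag, Pi.single_apply]

theorem finrank_eq_choose_two_of_transferMatrix_mem {S : Submodule ℝ (Fin n → Fin n → ℝ)}
    (hS : S ≤ teslerDirections n) (hT : ∀ i j, i < j → transferMatrix i j ∈ S) :
    Module.finrank ℝ S = n.choose 2 := by
  let f := (strictUpperEntries n).domRestrict S
  have hinj : Function.Injective f := by
    rw [← LinearMap.ker_eq_bot, LinearMap.ker_eq_bot']
    exact fun v hv => Subtype.ext (eq_zero_of_strictUpperEntries_eq_zero (hS v.2) hv)
  have hsurj : Function.Surjective f := by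
    rw [← LinearMap.range_eq_top, eq_top_iff, ← (Pi.basisFun ℝ _).span_eq, Submodule.span_le]
    rintro _ ⟨⟨⟨i, j⟩, h⟩, rfl⟩
    exact ⟨⟨transferMatrix i j, hT i j h⟩, by simp [f, strictUpperEntries_transferMatrix h]⟩
  rw [(LinearEquiv.ofBijective f ⟨hinj, hsurj⟩).finrank_eq, Module.finrank_fintype_fun_eq_card,
    Fintype.card_subtype, Fintype.card_product_filter_lt, Fintype.card_fin]

end

/-- If `a₁ > 0`, the Tesler polytope `Tes_n(a)` has affine dimension `n choose 2`. -/
theorem teslerPolytope_dim (n : ℕ) (hn : 0 < n) (a : Fin n → ℕ) (ha : 0 < a ⟨0, hn⟩) :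
    Module.finrank ℝ (affineSpan ℝ (TeslerPolytope n a)).direction = n.choose 2 :=
  finrank_eq_choose_two_of_transferMatrix_mem TeslerPolytope.direction_affineSpan_le
    fun _ _ hij => TeslerPolytope.transferMatrix_mem_direction ha (Nat.zero_le _) hij
end

section
/- Let a = (a_1,…,a_n) be a vector of nonnegative integers with a_1 > 0. Then the Tesler polytope Tes_n(a) has at most n! extreme points (vertices). Moreover, Tes_n(a) has exactly n! extreme points if and only if a_2, a_3, …, a_{n−1} are all positive. -/
/-!
Read `x ∈ Tes_n(a)` as a flow: `x i j` (`i < j`) carries flow from `i` to `j`, `x k k` from `k`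
to a sink, and `a k` enters at `k`; the hook condition is conservation of flow. If row `k` has
two nonzero entries, following positive entries from each of them gives two unit paths from `k`
to the sink, and `x` can move both ways along their difference, so it is not a vertex.
Conversely, a matrix whose row `k` is supported in column `f k` is determined row by row by
the hook sums. Hence the vertices are the matrices attached to the `n!` maps `f` with
`k ≤ f k`, the entry of row `k` being `a k` plus all flow routed into `k`. This entry is at
least `a k`, which locates `f k` when `a k > 0`; if `a i = 0` for some `i < n - 1`, the
identity and the map sending `i` to `i + 1` give the same vertex.
-/

open Finset

lemma ncard_setOf_forall_le_apply (n : ℕ) :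
    {f : Fin n → Fin n | ∀ k, k ≤ f k}.ncard = n.factorial := by
  rw [← Nat.card_coe_set_eq, Set.coe_ofPred, Nat.card_congr Equiv.subtypePiEquivPi, Nat.card_pi]
  simp only [Nat.card_eq_fintype_card, Fintype.card_subtype, filter_le_eq_Ici, Fin.card_Ici]
  rw [Fin.prod_univ_eq_prod_range (n - ·), ← Nat.descFactorial_eq_prod_range,
    Nat.descFactorial_self]

namespace TeslerPolytope

open Filter Topology

variable {n : ℕ} {a : Fin n → ℕ} {x y : Fin n → Fin n → ℝ}

def hook : (Fin n → Fin n → ℝ) →ₗ[ℝ] Fin n → ℝ where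
  toFun x k := (∑ j ∈ univ.filter (fun j => k ≤ j), x k j)
    - (∑ i ∈ univ.filter (fun i => i < k), x i k)
  map_add' x y := by ext k; simp only [Pi.add_apply, sum_add_distrib]; ring
  map_smul' c x := by ext k; simp only [Pi.smul_apply, smul_eq_mul, ← mul_sum]; simp; ring

lemma hook_apply (x : Fin n → Fin n → ℝ) (k : Fin n) :
    hook x k = (∑ j ∈ univ.filter (fun j => k ≤ j), x k j)
      - (∑ i ∈ univ.filter (fun i => i < k), x i k) :=
  rfl

lemma eq_zero_of_lt (hx : x ∈ TeslerPolytope n a) {i j : Fin n} (h : j < i) : x i j = 0 :=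
  hx.1 i j h

lemma hook_eq (hx : x ∈ TeslerPolytope n a) (k : Fin n) : hook x k = a k :=
  hx.2.2 k

lemma nonneg (hx : x ∈ TeslerPolytope n a) (i j : Fin n) : 0 ≤ x i j := by
  rcases lt_or_ge j i with h | h
  · exact (eq_zero_of_lt hx h).ge
  · exact hx.2.1 i j h

lemma hook_single_self (m : Fin n) : hook (Pi.single m (Pi.single m 1)) = Pi.single m 1 := by
  ext s
  rcases eq_or_ne s m with rfl | hsm
  · simp [hook_apply, Pi.single_apply, ite_apply]
  · simp [hook_apply, Pi.single_apply, ite_apply, hsm]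

lemma hook_single_of_lt {m q : Fin n} (h : m < q) :
    hook (Pi.single m (Pi.single q 1)) = Pi.single m 1 - Pi.single q 1 := by
  ext s
  rcases eq_or_ne s m with rfl | hsm
  · simp [hook_apply, Pi.single_apply, ite_apply, h.le, h.ne]
  rcases eq_or_ne s q with rfl | hsq
  · simp [hook_apply, Pi.single_apply, ite_apply, hsm, h]
  · simp [hook_apply, Pi.single_apply, ite_apply, hsm, hsq]

lemma sum_row_eq_of_support {p q : Fin n} (hlow : ∀ j, j < p → x p j = 0)
    (hsupp : ∀ r, x p r ≠ 0 → r = q) : ∑ j ∈ univ.filter (fun j => p ≤ j), x p j = x p q :=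
  sum_eq_single q (fun j _ hj => by_contra fun h => hj (hsupp j h))
    (fun hq => hlow q (by simpa using hq))

lemma exists_pos_of_pos (hx : x ∈ TeslerPolytope n a) {m q : Fin n} (hmq : m < q)
    (hpos : 0 < x m q) : ∃ r, q ≤ r ∧ 0 < x q r := by
  have hin : 0 < ∑ i ∈ univ.filter (fun i => i < q), x i q :=
    sum_pos' (fun i _ => nonneg hx i q) ⟨m, by simpa using hmq, hpos⟩
  have hout : 0 < ∑ j ∈ univ.filter (fun j => q ≤ j), x q j := by
    have := hook_eq hx q
    rw [hook_apply] at this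
    linarith [(Nat.cast_nonneg (a q) : (0 : ℝ) ≤ a q)]
  obtain ⟨r, hr, hxr⟩ := exists_lt_of_sum_lt (f := fun _ => (0 : ℝ)) (by simpa using hout)
  exact ⟨r, by simpa using hr, hxr⟩

/-- A unit flow from `m` to the diagonal along positive entries of `x`, leaving row `m` through
column `q`. -/
lemma exists_path (hx : x ∈ TeslerPolytope n a) (m : Fin n) :
    ∀ q, m ≤ q → 0 < x m q → ∃ w : Fin n → Fin n → ℝ,
      (∀ p r, w p r ≠ 0 → m ≤ p ∧ 0 < x p r) ∧ w m = Pi.single q 1 ∧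
        hook w = Pi.single m 1 := by
  induction m using WellFoundedGT.induction with | ind m ih
  intro q hmq hpos
  rcases hmq.eq_or_lt with rfl | hlt
  · refine ⟨Pi.single m (Pi.single m 1), fun p r hw => ?_, by simp, hook_single_self m⟩
    obtain ⟨rfl, rfl⟩ : p = m ∧ r = p := by
      by_contra h
      simp_all [Pi.single_apply, ite_apply]
    exact ⟨le_rfl, hpos⟩
  obtain ⟨r, hqr, hr⟩ := exists_pos_of_pos hx hlt hpos
  obtain ⟨w, hw_supp, -, hw_hook⟩ := ih q hlt r hqr hr
  have hw_m : w m = 0 := funext fun r => by_contra fun h => hlt.not_ge (hw_supp m r h).1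
  refine ⟨Pi.single m (Pi.single q 1) + w, fun p r hpr => ?_, by simp [hw_m], ?_⟩
  · rcases eq_or_ne p m with rfl | hpm
    · obtain rfl : r = q := by by_contra h; simp_all
      exact ⟨le_rfl, hpos⟩
    · obtain ⟨hqp, hpos⟩ := hw_supp p r (by simpa [hpm] using hpr)
      exact ⟨hlt.le.trans hqp, hpos⟩
  · rw [map_add, hook_single_of_lt hlt, hw_hook, sub_add_cancel]

/-- `x ± ε • d` lies in the polytope for small `ε`. -/
lemma notMem_extremePoints_of_hook_eq_zero (hx : x ∈ TeslerPolytope n a)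
    {d : Fin n → Fin n → ℝ} (hd : hook d = 0) (hsupp : ∀ p r, d p r ≠ 0 → 0 < x p r)
    (hne : d ≠ 0) : x ∉ Set.extremePoints ℝ (TeslerPolytope n a) := by
  have hsmall : ∀ᶠ ε in 𝓝 (0 : ℝ), ∀ p r, 0 ≤ x p r + ε * d p r := by
    refine eventually_all.2 fun p => eventually_all.2 fun r => ?_
    by_cases hpr : d p r = 0
    · simp [hpr, nonneg hx p r]
    · have hcont : Tendsto (fun ε : ℝ => x p r + ε * d p r) (𝓝 0) (𝓝 (x p r)) :=
        (continuous_const.add (continuous_id.mul continuous_const)).tendsto' _ _ (by simp)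
      exact (hcont.eventually (lt_mem_nhds (hsupp p r hpr))).mono fun _ => le_of_lt
  have hmem : ∀ ε, (∀ p r, 0 ≤ x p r + ε * d p r) → x + ε • d ∈ TeslerPolytope n a := by
    intro ε hε
    refine ⟨fun i j hji => ?_, fun i j _ => hε i j, fun k => ?_⟩
    · have hd0 : d i j = 0 := by_contra fun h => (hsupp i j h).ne' (eq_zero_of_lt hx hji)
      simp [eq_zero_of_lt hx hji, hd0]
    · rw [← hook_apply, map_add, map_smul, hd, smul_zero, add_zero, hook_eq hx]
  obtain ⟨ε, ⟨hplus, hminus⟩, hε⟩ :=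
    (((hsmall.and ((continuous_neg.tendsto' 0 0 neg_zero).eventually hsmall)).filter_mono
      nhdsWithin_le_nhds).and (self_mem_nhdsWithin (s := {0}ᶜ))).exists
  intro hext
  have hseg : x ∈ openSegment ℝ (x + ε • d) (x + (-ε) • d) :=
    ⟨1 / 2, 1 / 2, by norm_num, by norm_num, by norm_num, by ext; simp; ring⟩
  have := (mem_extremePoints_iff_left.1 hext).2 _ (hmem ε hplus) _ (hmem (-ε) hminus) hseg
  exact hne ((smul_eq_zero.1 (add_eq_left.1 this)).resolve_left hε)

lemma eq_of_mem_extremePoints (hext : x ∈ Set.extremePoints ℝ (TeslerPolytope n a))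
    {k i j : Fin n} (hi : x k i ≠ 0) (hj : x k j ≠ 0) : i = j := by
  have hx := hext.1
  have hpos : ∀ r, x k r ≠ 0 → k ≤ r ∧ 0 < x k r := fun r hr =>
    ⟨le_of_not_gt fun h => hr (eq_zero_of_lt hx h), (nonneg hx k r).lt_of_ne' hr⟩
  obtain ⟨w₁, hs₁, hrow₁, hhook₁⟩ := exists_path hx k i (hpos i hi).1 (hpos i hi).2
  obtain ⟨w₂, hs₂, hrow₂, hhook₂⟩ := exists_path hx k j (hpos j hj).1 (hpos j hj).2
  by_contra hij
  refine notMem_extremePoints_of_hook_eq_zero hx (d := w₁ - w₂)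
    (by rw [map_sub, hhook₁, hhook₂, sub_self]) (fun p r hpr => ?_) (fun h => ?_) hext
  · by_cases h₁ : w₁ p r = 0
    · exact (hs₂ p r (by simpa [h₁] using hpr)).2
    · exact (hs₁ p r h₁).2
  · have := congrFun (congrFun h k) i
    simp [hrow₁, hrow₂, hij] at this

lemma exists_graph_of_mem_extremePoints (hext : x ∈ Set.extremePoints ℝ (TeslerPolytope n a)) :
    ∃ f : Fin n → Fin n, (∀ k, k ≤ f k) ∧ ∀ p r, x p r ≠ 0 → r = f p := by
  have hrow : ∀ p, ∃ q, p ≤ q ∧ ∀ r, x p r ≠ 0 → r = q := by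
    intro p
    by_cases h : ∃ r, x p r ≠ 0
    · obtain ⟨q, hq⟩ := h
      exact ⟨q, le_of_not_gt fun hqp => hq (eq_zero_of_lt hext.1 hqp),
        fun r hr => eq_of_mem_extremePoints hext hr hq⟩
    · exact ⟨p, le_rfl, fun r hr => absurd ⟨r, hr⟩ h⟩
  choose f hf using hrow
  exact ⟨f, fun k => (hf k).1, fun p => (hf p).2⟩

/-- Row by row, the hook sum determines the single possibly nonzero entry of the row from the
earlier rows. -/
lemma eq_of_support_subset_graph (hx : x ∈ TeslerPolytope n a) (hy : y ∈ TeslerPolytope n a)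
    (f : Fin n → Fin n) (hxf : ∀ p r, x p r ≠ 0 → r = f p) (hyf : ∀ p r, y p r ≠ 0 → r = f p) :
    x = y := by
  funext p
  induction p using WellFoundedLT.induction with | ind p ih
  have hcol : ∑ i ∈ univ.filter (fun i => i < p), x i p =
      ∑ i ∈ univ.filter (fun i => i < p), y i p :=
    sum_congr rfl fun i hi => congrFun (ih i (by simpa using hi)) p
  have hdiag : x p (f p) = y p (f p) := by
    have hxp := hook_eq hx p
    have hyp := hook_eq hy p
    rw [hook_apply, sum_row_eq_of_support (fun _ => eq_zero_of_lt hx) (hxf p)] at hxp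
    rw [hook_apply, sum_row_eq_of_support (fun _ => eq_zero_of_lt hy) (hyf p)] at hyp
    linarith
  funext r
  by_cases hr : r = f p
  · rw [hr, hdiag]
  · rw [not_imp_comm.1 (hxf p r) hr, not_imp_comm.1 (hyf p r) hr]

lemma mem_extremePoints_of_support_subset_graph (hx : x ∈ TeslerPolytope n a) (f : Fin n → Fin n)
    (hf : ∀ p r, x p r ≠ 0 → r = f p) : x ∈ Set.extremePoints ℝ (TeslerPolytope n a) := by
  refine mem_extremePoints_iff_left.2 ⟨hx, fun y hy z hz ⟨t, u, ht, hu, _, hxyz⟩ => ?_⟩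
  refine eq_of_support_subset_graph hy hx f (fun p r hyr => hf p r fun hxr => hyr ?_) hf
  have hsum : t * y p r + u * z p r = 0 := by
    simpa [hxr] using congrFun (congrFun hxyz p) r
  have := nonneg hy p r
  have := nonneg hz p r
  have hty : t * y p r = 0 := by nlinarith
  exact (mul_eq_zero.1 hty).resolve_left ht.ne'

/-- The nonzero entry in row `k` of the vertex attached to `f`: the source `a k` plus all flow
arriving in column `k`. -/
noncomputable def vertexEntry (a : Fin n → ℕ) (f : Fin n → Fin n) (k : Fin n) : ℝ :=
  a k + ∑ i : Fin n, if _ : i < k ∧ f i = k then vertexEntry a f i else 0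
termination_by (k : ℕ)
decreasing_by omega

noncomputable def teslerVertex (a : Fin n → ℕ) (f : Fin n → Fin n) : Fin n → Fin n → ℝ :=
  fun p r => if r = f p then vertexEntry a f p else 0

variable {f : Fin n → Fin n}

lemma vertexEntry_eq (k : Fin n) :
    vertexEntry a f k = a k + ∑ i ∈ univ.filter (fun i => i < k), teslerVertex a f i k := by
  rw [vertexEntry, sum_filter]
  congr 1
  refine sum_congr rfl fun i _ => ?_
  by_cases hi : i < k <;> by_cases hfi : f i = k <;>
    simp [teslerVertex, hi, hfi, eq_comm (a := k)]

lemma natCast_le_vertexEntry (k : Fin n) : (a k : ℝ) ≤ vertexEntry a f k := by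
  induction k using WellFoundedLT.induction with | ind k ih
  rw [vertexEntry_eq]
  refine le_add_of_nonneg_right (sum_nonneg fun i hi => ?_)
  unfold teslerVertex
  split_ifs
  · exact (Nat.cast_nonneg _).trans (ih i (by simpa using hi))
  · exact le_rfl

lemma eq_of_teslerVertex_ne_zero {p r : Fin n} (h : teslerVertex a f p r ≠ 0) : r = f p :=
  by_contra fun hr => h (if_neg hr)

lemma teslerVertex_mem (hf : ∀ k, k ≤ f k) : teslerVertex a f ∈ TeslerPolytope n a := by
  have hlow : ∀ p r, r < p → teslerVertex a f p r = 0 := fun p r hrp =>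
    if_neg fun h => (h ▸ hrp).not_ge (hf p)
  refine ⟨hlow, fun p r _ => ?_, fun k => ?_⟩
  · unfold teslerVertex
    split_ifs
    · exact (Nat.cast_nonneg _).trans (natCast_le_vertexEntry p)
    · exact le_rfl
  · rw [sum_row_eq_of_support (hlow k) (fun _ => eq_of_teslerVertex_ne_zero), teslerVertex,
      if_pos rfl, vertexEntry_eq]
    ring

lemma extremePoints_eq_image :
    Set.extremePoints ℝ (TeslerPolytope n a) = teslerVertex a '' {f | ∀ k, k ≤ f k} := by
  ext x
  constructor
  · intro hext
    obtain ⟨f, hf, hxf⟩ := exists_graph_of_mem_extremePoints hext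
    exact ⟨f, hf, eq_of_support_subset_graph (teslerVertex_mem hf) hext.1 f
      (fun _ _ => eq_of_teslerVertex_ne_zero) hxf⟩
  · rintro ⟨f, hf, rfl⟩
    exact mem_extremePoints_of_support_subset_graph (teslerVertex_mem hf) f
      (fun _ _ => eq_of_teslerVertex_ne_zero)

lemma injOn_teslerVertex (hpos : ∀ k : Fin n, (k : ℕ) + 1 < n → 0 < a k) :
    Set.InjOn (teslerVertex a) {f | ∀ k, k ≤ f k} := by
  intro f hf g hg hfg
  funext k
  by_cases hk : (k : ℕ) + 1 < n
  · have hne : teslerVertex a g k (f k) ≠ 0 := by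
      rw [← hfg, teslerVertex, if_pos rfl]
      exact ((Nat.cast_pos.2 (hpos k hk)).trans_le (natCast_le_vertexEntry k)).ne'
    exact eq_of_teslerVertex_ne_zero hne
  · have hfk := Fin.le_def.1 (hf k)
    have hgk := Fin.le_def.1 (hg k)
    exact Fin.ext (by omega)

/-- If `a i = 0`, the row `i` of the vertex attached to the identity is zero, so the flow of
row `i` may equally be routed to column `i + 1`. -/
lemma not_injOn_teslerVertex {i : Fin n} (hi : (i : ℕ) + 1 < n) (hai : a i = 0) :
    ¬ Set.InjOn (teslerVertex a) {f | ∀ k, k ≤ f k} := by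
  set g := Function.update id i ⟨i + 1, hi⟩
  have hg : ∀ k, k ≤ g k := by
    intro k
    rcases eq_or_ne k i with rfl | hki
    · simp [g, Fin.le_def]
    · simp [g, hki]
  have hgi : vertexEntry a g i = 0 := by
    rw [vertexEntry_eq, hai, Nat.cast_zero, zero_add]
    refine sum_eq_zero fun m hm => if_neg fun him => ?_
    have hmi : m < i := by simpa using hm
    simp [g, hmi.ne] at him
    exact hmi.ne him.symm
  have hsupp : ∀ p r, teslerVertex a g p r ≠ 0 → r = id p := by
    intro p r hpr
    rcases eq_or_ne p i with rfl | hpi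
    · simp [teslerVertex, hgi] at hpr
    · simpa [g, hpi] using eq_of_teslerVertex_ne_zero hpr
  intro hinj
  have hid : (id : Fin n → Fin n) ∈ {f | ∀ k, k ≤ f k} := fun _ => le_rfl
  have := congrFun (hinj hg hid (eq_of_support_subset_graph (teslerVertex_mem hg)
    (teslerVertex_mem hid) id hsupp (fun _ _ => eq_of_teslerVertex_ne_zero))) i
  simp [g, Fin.ext_iff] at this

end TeslerPolytope

/-- In `0`-based indexing, `a₂, …, a_{n-1}` are the `a i` with `1 ≤ i` and `i + 1 < n`. -/
theorem teslerPolytope_vertex_count (n : ℕ) (hn : 0 < n) (a : Fin n → ℕ)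
    (ha : 0 < a ⟨0, hn⟩) :
    (Set.extremePoints ℝ (TeslerPolytope n a)).ncard ≤ n.factorial ∧
    ((Set.extremePoints ℝ (TeslerPolytope n a)).ncard = n.factorial ↔
      ∀ i : Fin n, 1 ≤ (i : ℕ) → (i : ℕ) + 1 < n → 0 < a i) := by
  rw [TeslerPolytope.extremePoints_eq_image, ← ncard_setOf_forall_le_apply n,
    Set.ncard_image_iff]
  refine ⟨Set.ncard_image_le (Set.toFinite _), fun hinj i _ hi => ?_, fun hpos => ?_⟩
  · exact Nat.pos_of_ne_zero fun hai => TeslerPolytope.not_injOn_teslerVertex hi hai hinj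
  · refine TeslerPolytope.injOn_teslerVertex fun k hk => ?_
    rcases Nat.eq_zero_or_pos k with hk0 | hk0
    · rwa [show k = ⟨0, hn⟩ from Fin.ext hk0]
    · exact hpos k hk0 hk
end

section
/- For every n ≥ 1, the rational number identity C(n,2)! · 2^{C(n,2)} / ∏_{i=1}^n i! = f^{(n−1,n−2,…,1)} · ∏_{i=1}^{n−1} Cat(i) holds, where C(n,2) = n(n−1)/2, f^{(n−1,n−2,…,1)} = C(n,2)! / ∏_{k=1}^{n−1} (2k−1)^{n−k} is the number of standard Young tableaux of staircase shape (n−1, n−2, …, 1), and Cat(i) = (1/(i+1))·C(2i,i) is the i-th Catalan number. -/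
/-!
Cancelling `C(n,2)!` (the hook lengths of the staircase are the odd numbers, `2k - 1` occurring
`n - k` times), the identity becomes
`2^{C(n,2)} ∏_{k<n} (2k-1)^{n-k} = ∏_{i<n} Cat(i) · ∏_{i≤n} i!`.
Grouping the left side by rows turns it into `∏_{i<n} 2^i (2i-1)‼`, and each factor is
`2^i (2i-1)‼ = (2i)! / i! = Cat(i) (i+1)!`.
-/

open Finset Nat

theorem prod_Icc_prod_Icc_eq_prod_pow {M : Type*} [CommMonoid M] (f : ℕ → M) (a b : ℕ) :
    ∏ i ∈ Icc a b, ∏ k ∈ Icc a i, f k = ∏ k ∈ Icc a b, f k ^ (b + 1 - k) := by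
  rw [prod_comm' (t' := Icc a b) (s' := fun k => Icc k b)
    (by intro i k; simp only [mem_Icc]; omega)]
  simp only [prod_const, Nat.card_Icc]

theorem sum_Icc_id_eq_choose_two (m : ℕ) : ∑ i ∈ Icc 1 m, i = (m + 1).choose 2 := by
  induction m with
  | zero => rfl
  | succ m ih =>
    rw [sum_Icc_succ_top (by omega), ih, Nat.choose_succ_succ' (m + 1) 1, Nat.choose_one_right,
      add_comm]

theorem mul_prod_Icc_add_one_eq_prod_Icc {M : Type*} [CommMonoid M] (f : ℕ → M) (m : ℕ) :
    f 1 * ∏ i ∈ Icc 1 m, f (i + 1) = ∏ i ∈ Icc 1 (m + 1), f i := by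
  rw [Icc_eq_cons_Ioc (by omega : 1 ≤ m + 1), prod_cons, ← Icc_add_one_left_eq_Ioc,
    ← map_add_right_Icc, prod_map]
  rfl

theorem prod_Icc_two_mul_sub_one_eq_doubleFactorial (n : ℕ) :
    ∏ k ∈ Icc 1 n, (2 * k - 1) = (2 * n - 1)‼ := by
  induction n with
  | zero => rfl
  | succ n ih =>
    rw [prod_Icc_succ_top (by omega), ih, show 2 * (n + 1) - 1 = 2 * n + 1 by omega,
      doubleFactorial_add_one, mul_comm]

theorem two_pow_mul_factorial_mul_doubleFactorial (n : ℕ) :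
    2 ^ n * n ! * (2 * n - 1)‼ = (2 * n)! := by
  rcases n with _ | n
  · rfl
  · rw [← doubleFactorial_two_mul, show 2 * (n + 1) = 2 * n + 1 + 1 by omega,
      factorial_eq_mul_doubleFactorial]
    rfl

theorem catalan_mul_factorial_succ_mul_factorial (n : ℕ) :
    catalan n * (n + 1)! * n ! = (2 * n)! := by
  rw [factorial_succ, ← mul_assoc, mul_comm (catalan n), succ_mul_catalan_eq_centralBinom,
    centralBinom_eq_two_mul_choose]
  simpa [two_mul] using choose_mul_factorial_mul_factorial (Nat.le_add_left n n)

theorem two_pow_mul_doubleFactorial_eq_catalan_mul_factorial (n : ℕ) :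
    2 ^ n * (2 * n - 1)‼ = catalan n * (n + 1)! := by
  apply Nat.eq_of_mul_eq_mul_right n.factorial_pos
  rw [mul_right_comm, two_pow_mul_factorial_mul_doubleFactorial,
    catalan_mul_factorial_succ_mul_factorial]

theorem cast_catalan_eq_one_div_mul_choose {K : Type*} [Field K] [CharZero K] (n : ℕ) :
    (catalan n : K) = 1 / ((n : K) + 1) * ((2 * n).choose n : ℕ) := by
  rw [← centralBinom_eq_two_mul_choose, ← succ_mul_catalan_eq_centralBinom]
  push_cast
  field_simp

theorem two_pow_choose_two_mul_prod_odd_pow (m : ℕ) :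
    2 ^ (m + 1).choose 2 * ∏ k ∈ Icc 1 m, (2 * k - 1) ^ (m + 1 - k) =
      (∏ i ∈ Icc 1 m, catalan i) * ∏ i ∈ Icc 1 (m + 1), i ! := by
  calc _ = ∏ i ∈ Icc 1 m, 2 ^ i * ∏ k ∈ Icc 1 i, (2 * k - 1) := by
        rw [prod_mul_distrib, prod_pow_eq_pow_sum, sum_Icc_id_eq_choose_two,
          prod_Icc_prod_Icc_eq_prod_pow]
    _ = ∏ i ∈ Icc 1 m, catalan i * (i + 1)! := by
        refine prod_congr rfl fun i _ => ?_
        rw [prod_Icc_two_mul_sub_one_eq_doubleFactorial,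
          two_pow_mul_doubleFactorial_eq_catalan_mul_factorial]
    _ = _ := by
        rw [prod_mul_distrib, ← mul_prod_Icc_add_one_eq_prod_Icc (fun i => i !), factorial_one,
          one_mul]

theorem staircase_catalan_identity_general (n : ℕ) :
    (((n.choose 2).factorial : ℚ) * 2 ^ n.choose 2) /
        (∏ i ∈ Finset.Icc 1 n, (i.factorial : ℚ)) =
      (((n.choose 2).factorial : ℚ) /
          ∏ k ∈ Finset.Icc 1 (n - 1), ((2 * k - 1 : ℕ) : ℚ) ^ (n - k)) *
        ∏ i ∈ Finset.Icc 1 (n - 1), ((1 / ((i : ℚ) + 1)) * (((2 * i).choose i : ℕ) : ℚ)) := by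
  rcases n with _ | m
  · simp
  have key : (2 : ℚ) ^ (m + 1).choose 2 * ∏ k ∈ Icc 1 m, ((2 * k - 1 : ℕ) : ℚ) ^ (m + 1 - k) =
      (∏ i ∈ Icc 1 m, (catalan i : ℚ)) * ∏ i ∈ Icc 1 (m + 1), (i ! : ℚ) := by
    exact_mod_cast two_pow_choose_two_mul_prod_odd_pow m
  have hF : ∏ i ∈ Icc 1 (m + 1), (i ! : ℚ) ≠ 0 := prod_ne_zero_iff.mpr fun i _ => by positivity
  have hD : ∏ k ∈ Icc 1 m, ((2 * k - 1 : ℕ) : ℚ) ^ (m + 1 - k) ≠ 0 :=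
    prod_ne_zero_iff.mpr fun k hk => by
      have : 2 * k - 1 ≠ 0 := by simp only [mem_Icc] at hk; omega
      positivity
  simp only [Nat.add_sub_cancel, ← cast_catalan_eq_one_div_mul_choose]
  rw [div_mul_eq_mul_div, div_eq_div_iff hF hD]
  linear_combination (((m + 1).choose 2)! : ℚ) * key

/-- For every `n ≥ 1`,
`C(n,2)! · 2^{C(n,2)} / ∏_{i=1}^n i! = f^{(n-1,…,1)} · ∏_{i=1}^{n-1} Cat(i)`,
where `f^{(n-1,…,1)} = C(n,2)! / ∏_{k=1}^{n-1} (2k-1)^{n-k}` is the number of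
standard Young tableaux of staircase shape and `Cat(i) = C(2i,i)/(i+1)` is the
`i`-th Catalan number. -/
theorem staircase_catalan_identity (n : ℕ) (hn : 1 ≤ n) :
    (((n.choose 2).factorial : ℚ) * 2 ^ n.choose 2) /
        (∏ i ∈ Finset.Icc 1 n, (i.factorial : ℚ)) =
      (((n.choose 2).factorial : ℚ) /
          ∏ k ∈ Finset.Icc 1 (n - 1), ((2 * k - 1 : ℕ) : ℚ) ^ (n - k)) *
        ∏ i ∈ Finset.Icc 1 (n - 1), ((1 / ((i : ℚ) + 1)) * (((2 * i).choose i : ℕ) : ℚ)) :=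
  staircase_catalan_identity_general n
end

section
/- For every n ≥ 1, the number T_n(1,1,…,1) of n×n Tesler matrices with all hook sums equal to 1 satisfies n! ≤ T_n(1,…,1) ≤ 2^{n(n−1)/2}. -/
open Finset

namespace TeslerAux

def rS (n : ℕ) (b : Fin n → Fin n → ℕ) (k : Fin n) : ℕ :=
  ∑ j, if k ≤ j then b k j else 0

def cS (n : ℕ) (b : Fin n → Fin n → ℕ) (k : Fin n) : ℕ :=
  ∑ i, if i < k then b i k else 0

lemma isTesler_iff (n : ℕ) (a : Fin n → ℕ) (b : Fin n → Fin n → ℕ) :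
    IsTeslerMatrix n a b ↔
      ((∀ i j : Fin n, j < i → b i j = 0) ∧ ∀ k, rS n b k = a k + cS n b k) := by
  unfold IsTeslerMatrix rS cS
  refine and_congr_right fun _ => forall_congr' fun k => ?_
  have h1 : (∑ j ∈ univ.filter (fun j => k ≤ j), (b k j : ℤ))
      = ((∑ j, if k ≤ j then b k j else 0 : ℕ) : ℤ) := by
    rw [Finset.sum_filter]
    push_cast
    rfl
  have h2 : (∑ i ∈ univ.filter (fun i => i < k), (b i k : ℤ))
      = ((∑ i, if i < k then b i k else 0 : ℕ) : ℤ) := by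
    rw [Finset.sum_filter]
    push_cast
    rfl
  rw [h1, h2]
  omega


def bm (n : ℕ) (c : Fin n → Fin n) : ℕ → Fin n → ℕ
  | k => fun j =>
    if hk : k < n then
      if j = c ⟨k, hk⟩ then 1 + ∑ i ∈ (Finset.range k).attach, bm n c i.1 ⟨k, hk⟩ else 0
    else 0
  decreasing_by exact Finset.mem_range.mp i.2

def Mmat (n : ℕ) (c : Fin n → Fin n) : Fin n → Fin n → ℕ :=
  fun i j => bm n c i.val j

lemma Mmat_apply (n : ℕ) (c : Fin n → Fin n) (k j : Fin n) :
    Mmat n c k j = if j = c k then 1 + ∑ i ∈ Finset.range k.val, bm n c i k else 0 := by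
  have h : Mmat n c k j = (if hk : k.val < n then
      if j = c ⟨k.val, hk⟩ then 1 + ∑ i ∈ (Finset.range k.val).attach, bm n c i.1 ⟨k.val, hk⟩ else 0
    else 0) := by
    rw [Mmat, bm]
  rw [h, dif_pos k.isLt]
  simp [Finset.sum_attach (Finset.range k.val) (fun i => bm n c i k)]

lemma Mmat_pos (n : ℕ) (c : Fin n → Fin n) (k : Fin n) : 1 ≤ Mmat n c k (c k) := by
  rw [Mmat_apply, if_pos rfl]; omega

lemma Mmat_ne (n : ℕ) (c : Fin n → Fin n) (k j : Fin n) (h : j ≠ c k) :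
    Mmat n c k j = 0 := by
  rw [Mmat_apply, if_neg h]


lemma filter_range_eq (n v : ℕ) (hv : v ≤ n) :
    (Finset.range n).filter (fun i => i < v) = Finset.range v := by
  ext i; simp; omega

lemma Mmat_tesler (n : ℕ) (c : Fin n → Fin n) (hc : ∀ k, k ≤ c k) :
    (∀ i j : Fin n, j < i → Mmat n c i j = 0) ∧
      ∀ k, rS n (Mmat n c) k = 1 + cS n (Mmat n c) k := by
  constructor
  · intro i j hji
    exact Mmat_ne n c i j (fun h => absurd (h ▸ hji) (not_lt.2 (hc i)))
  · intro k
    have hrow : rS n (Mmat n c) k = 1 + ∑ i ∈ Finset.range k.val, bm n c i k := by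
      rw [rS, Finset.sum_eq_single (c k)]
      · rw [if_pos (hc k), Mmat_apply, if_pos rfl]
      · intro j _ hj
        rw [Mmat_ne n c k j hj]; simp
      · simp
    have hcol : cS n (Mmat n c) k = ∑ i ∈ Finset.range k.val, bm n c i k := by
      rw [cS]
      have : ∀ i : Fin n, (if i < k then Mmat n c i k else 0)
          = (fun m => if m < k.val then bm n c m k else 0) i.val := by
        intro i; rfl
      rw [Fintype.sum_congr _ _ this,
        Fin.sum_univ_eq_sum_range (fun m => if m < k.val then bm n c m k else 0) n,
        ← Finset.sum_filter, filter_range_eq n k.val (le_of_lt k.isLt)]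
    rw [hrow, hcol]

def lowerMap (n : ℕ) : {c : Fin n → Fin n // ∀ k, k ≤ c k} →
    {b : Fin n → Fin n → ℕ // IsTeslerMatrix n (fun _ => 1) b} :=
  fun c => ⟨Mmat n c.1, (isTesler_iff n _ _).mpr (Mmat_tesler n c.1 c.2)⟩

lemma lowerMap_inj (n : ℕ) : Function.Injective (lowerMap n) := by
  intro c c' h
  have hm : Mmat n c.1 = Mmat n c'.1 := congrArg Subtype.val h
  refine Subtype.ext (funext fun k => ?_)
  by_contra hne
  have h1 : 1 ≤ Mmat n c'.1 k (c'.1 k) := Mmat_pos n c'.1 k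
  have h0 : Mmat n c.1 k (c'.1 k) = 0 := Mmat_ne n c.1 k _ (fun he => hne (he.symm))
  rw [hm] at h0
  omega

lemma card_domain (n : ℕ) :
    Nat.card {c : Fin n → Fin n // ∀ k, k ≤ c k} = n.factorial := by
  rw [Nat.card_eq_fintype_card,
    Fintype.card_congr (Equiv.subtypePiEquivPi (p := fun (k j : Fin n) => k ≤ j)),
    Fintype.card_pi]
  have hcard : ∀ k : Fin n, Fintype.card {j : Fin n // k ≤ j} = n - k.val := by
    intro k
    rw [Fintype.card_subtype]
    have h : univ.filter (fun j => k ≤ j) = Finset.Ici k := by ext j; simp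
    rw [h, Fin.card_Ici]
  rw [Finset.prod_congr rfl (fun k _ => hcard k),
    Fin.prod_univ_eq_prod_range (fun k => n - k) n, ← Finset.prod_range_reflect]
  have h2 : ∀ j ∈ Finset.range n, n - (n - 1 - j) = j + 1 := by
    intro j hj; have := Finset.mem_range.mp hj; omega
  rw [Finset.prod_congr rfl h2, Finset.prod_range_add_one_eq_factorial]


lemma L0 (s : ℕ) : ∀ (a : ℕ) (w : Fin s → ℕ), (∀ k : Fin s, w k ≤ s - 2 - k.val) →
    ∑ r ∈ Finset.Nat.antidiagonalTuple s a, 2 ^ (∑ k, w k * r k) ≤ 2 ^ (a * (s - 1)) := by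
  induction s using Nat.strong_induction_on with
  | _ s ihs =>
  rcases s with _ | s
  · intro a w hw
    cases a with
    | zero => simp
    | succ a => simp
  rcases s with _ | s
  · intro a w hw
    have hw0 : w 0 = 0 := Nat.le_zero.mp (hw 0)
    simp [Finset.Nat.antidiagonalTuple_one, hw0]
  · intro a w hw
    have hdecomp : ∑ r ∈ Finset.Nat.antidiagonalTuple (s + 2) a, 2 ^ (∑ k, w k * r k)
        = ∑ p ∈ Finset.HasAntidiagonal.antidiagonal a, ∑ r' ∈ Finset.Nat.antidiagonalTuple (s + 1) p.2,
            2 ^ (∑ k : Fin (s + 2), w k * (Fin.cons p.1 r' : Fin (s + 2) → ℕ) k) := by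
      rw [Finset.sum_sigma']
      refine Finset.sum_nbij'
        (i := fun r => (⟨(r 0, ∑ k : Fin (s + 1), r k.succ), Fin.tail r⟩ :
          (p : ℕ × ℕ) × (Fin (s + 1) → ℕ)))
        (j := fun x => Fin.cons x.1.1 x.2) ?_ ?_ ?_ ?_ ?_
      · intro r hr
        rw [Finset.Nat.mem_antidiagonalTuple] at hr
        refine Finset.mem_sigma.mpr ⟨?_, Finset.Nat.mem_antidiagonalTuple.mpr rfl⟩
        rw [Finset.HasAntidiagonal.mem_antidiagonal, ← hr, Fin.sum_univ_succ (f := r)]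
      · intro x hx
        rw [Finset.mem_sigma] at hx
        rw [Finset.Nat.mem_antidiagonalTuple, Fin.sum_cons,
          Finset.Nat.mem_antidiagonalTuple.mp hx.2]
        exact Finset.HasAntidiagonal.mem_antidiagonal.mp hx.1
      · intro r _
        simp [Fin.cons_self_tail]
      · rintro ⟨⟨t, u⟩, r'⟩ hx
        rw [Finset.mem_sigma] at hx
        have h2 := Finset.Nat.mem_antidiagonalTuple.mp hx.2
        simp [Fin.cons_succ, Fin.tail_cons, h2]
      · intro r _
        rw [Fin.cons_self_tail]
    rw [hdecomp]
    have hterm : ∀ p ∈ Finset.HasAntidiagonal.antidiagonal a,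
        (∑ r' ∈ Finset.Nat.antidiagonalTuple (s + 1) p.2,
          2 ^ (∑ k : Fin (s + 2), w k * (Fin.cons p.1 r' : Fin (s + 2) → ℕ) k))
          ≤ 2 ^ (s * a) := by
      clear hdecomp
      intro p hp
      have hpa := Finset.HasAntidiagonal.mem_antidiagonal.mp hp
      have hinner : ∀ r' ∈ Finset.Nat.antidiagonalTuple (s + 1) p.2,
          2 ^ (∑ k : Fin (s + 2), w k * (Fin.cons p.1 r' : Fin (s + 2) → ℕ) k)
            = 2 ^ (w 0 * p.1) * 2 ^ (∑ k : Fin (s + 1), w k.succ * r' k) := by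
        intro r' _
        rw [Fin.sum_univ_succ]
        simp [Fin.cons_succ, Fin.cons_zero, pow_add]
      rw [Finset.sum_congr rfl hinner, ← Finset.mul_sum]
      clear hinner
      have hcond : ∀ k : Fin (s + 1), w k.succ ≤ s + 1 - 2 - k.val := by
        intro k
        have h := hw k.succ
        simp only [Fin.val_succ] at h
        omega
      have hih := ihs (s + 1) (Nat.lt_succ_self (s + 1)) p.2 (fun k => w k.succ) hcond
      calc 2 ^ (w 0 * p.1) * ∑ r' ∈ Finset.Nat.antidiagonalTuple (s + 1) p.2,
              2 ^ (∑ k : Fin (s + 1), w k.succ * r' k)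
          ≤ 2 ^ (w 0 * p.1) * 2 ^ (p.2 * s) := Nat.mul_le_mul_left _ (by simpa using hih)
        _ = 2 ^ (w 0 * p.1 + p.2 * s) := by rw [← pow_add]
        _ ≤ 2 ^ (s * a) := by
            apply Nat.pow_le_pow_right (by norm_num)
            have hw0 : w 0 ≤ s := by have := hw 0; simpa using this
            calc w 0 * p.1 + p.2 * s ≤ s * p.1 + p.2 * s := by
                  exact Nat.add_le_add_right (Nat.mul_le_mul_right _ hw0) _
              _ = s * a := by rw [← hpa]; ring
    calc ∑ p ∈ Finset.HasAntidiagonal.antidiagonal a, ∑ r' ∈ Finset.Nat.antidiagonalTuple (s + 1) p.2,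
            2 ^ (∑ k : Fin (s + 2), w k * (Fin.cons p.1 r' : Fin (s + 2) → ℕ) k)
        ≤ ∑ _p ∈ Finset.HasAntidiagonal.antidiagonal a, 2 ^ (s * a) := Finset.sum_le_sum hterm
      _ = (a + 1) * 2 ^ (s * a) := by
          rw [Finset.sum_const, Nat.card_antidiagonal, smul_eq_mul]
      _ ≤ 2 ^ a * 2 ^ (s * a) := Nat.mul_le_mul_right _ (Nat.lt_two_pow_self (n := a))
      _ = 2 ^ (a * (s + 2 - 1)) := by
          rw [← pow_add, show s + 2 - 1 = s + 1 from rfl]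
          congr 1
          ring

lemma L1 (s a : ℕ) (w : Fin s → ℕ) (σ : Equiv.Perm (Fin s)) :
    ∑ r ∈ Finset.Nat.antidiagonalTuple s a, 2 ^ (∑ k, w (σ k) * r k)
      = ∑ r ∈ Finset.Nat.antidiagonalTuple s a, 2 ^ (∑ k, w k * r k) := by
  refine Finset.sum_nbij' (i := fun r => r ∘ σ.symm) (j := fun r => r ∘ σ) ?_ ?_ ?_ ?_ ?_
  · intro r hr
    rw [Finset.Nat.mem_antidiagonalTuple] at hr ⊢
    rw [← hr]
    exact Equiv.sum_comp σ.symm r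
  · intro r hr
    rw [Finset.Nat.mem_antidiagonalTuple] at hr ⊢
    rw [← hr]
    exact Equiv.sum_comp σ r
  · intro r _; funext k; simp
  · intro r _; funext k; simp
  · intro r _
    congr 1
    rw [← Equiv.sum_comp σ (fun k => w k * (r ∘ σ.symm) k)]
    simp

def Ew (n : ℕ) (a : Fin n → ℕ) : ℕ := ∑ k : Fin n, (n - 1 - k.val) * a k

lemma key (m a0 : ℕ) :
    ∑ r ∈ Finset.Nat.antidiagonalTuple (m + 1) a0,
        2 ^ (∑ k : Fin m, (m - 1 - k.val) * r k.succ) ≤ 2 ^ (a0 * m) := by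
  set w : Fin (m + 1) → ℕ := fun k => if k.val = 0 then 0 else m - k.val with hw
  have hexp : ∀ r : Fin (m + 1) → ℕ,
      (∑ k : Fin m, (m - 1 - k.val) * r k.succ) = ∑ k : Fin (m + 1), w k * r k := by
    intro r
    rw [Fin.sum_univ_succ]
    have h0 : w 0 * r 0 = 0 := by simp [hw]
    rw [h0, zero_add]
    refine Finset.sum_congr rfl fun k _ => ?_
    have : w k.succ = m - 1 - k.val := by
      simp only [hw, Fin.val_succ]
      have : ¬ (k.val + 1 = 0) := by omega
      rw [if_neg this]
      omega
    rw [this]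
  have hrot : ∀ k : Fin (m + 1), w (finRotate (m + 1) k) = m - 1 - k.val := by
    intro k
    rw [finRotate_succ_apply]
    rcases eq_or_ne k (Fin.last m) with hk | hk
    · subst hk
      rw [Fin.last_add_one]
      have h1 : w 0 = 0 := by simp [hw]
      have h2 : m - 1 - (Fin.last m).val = 0 := by rw [Fin.val_last]; omega
      rw [h1, h2]
    · have : (k + 1).val = k.val + 1 := by
        rw [Fin.val_add_one, if_neg hk]
      simp only [hw, this]
      rw [if_neg (by omega)]
      have hkm : k.val < m := by
        have := k.isLt
        rcases Nat.lt_succ_iff_lt_or_eq.mp this with h | h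
        · exact h
        · exact absurd (Fin.ext h : k = Fin.last m) hk
      omega
  calc ∑ r ∈ Finset.Nat.antidiagonalTuple (m + 1) a0,
          2 ^ (∑ k : Fin m, (m - 1 - k.val) * r k.succ)
      = ∑ r ∈ Finset.Nat.antidiagonalTuple (m + 1) a0, 2 ^ (∑ k, w k * r k) := by
        refine Finset.sum_congr rfl fun r _ => by rw [hexp r]
    _ = ∑ r ∈ Finset.Nat.antidiagonalTuple (m + 1) a0,
          2 ^ (∑ k, w (finRotate (m + 1) k) * r k) := (L1 (m + 1) a0 w (finRotate (m + 1))).symm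
    _ = ∑ r ∈ Finset.Nat.antidiagonalTuple (m + 1) a0,
          2 ^ (∑ k, (fun j : Fin (m + 1) => m - 1 - j.val) k * r k) := by
        refine Finset.sum_congr rfl fun r _ => ?_
        congr 1
        exact Finset.sum_congr rfl fun k _ => by rw [hrot k]
    _ ≤ 2 ^ (a0 * (m + 1 - 1)) := L0 (m + 1) a0 _ (fun k => le_refl _)
    _ = 2 ^ (a0 * m) := rfl

lemma step_num (m : ℕ) (a : Fin (m + 1) → ℕ) :
    ∑ r ∈ Finset.Nat.antidiagonalTuple (m + 1) (a 0),
        2 ^ (Ew m (fun k => a k.succ + r k.succ)) ≤ 2 ^ (Ew (m + 1) a) := by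
  have hsplit : ∀ r : Fin (m + 1) → ℕ, Ew m (fun k => a k.succ + r k.succ)
      = (∑ k : Fin m, (m - 1 - k.val) * a k.succ)
        + ∑ k : Fin m, (m - 1 - k.val) * r k.succ := by
    intro r
    rw [Ew, ← Finset.sum_add_distrib]
    exact Finset.sum_congr rfl fun k _ => by ring
  have hE : Ew (m + 1) a = m * a 0 + ∑ k : Fin m, (m - 1 - k.val) * a k.succ := by
    rw [Ew, Fin.sum_univ_succ]
    have h0 : ((m + 1 : ℕ) - 1 - ((0 : Fin (m + 1))).val) * a 0 = m * a 0 := by simp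
    rw [h0]
    congr 1
    refine Finset.sum_congr rfl fun k _ => ?_
    congr 1
    simp only [Fin.val_succ]
    omega
  calc ∑ r ∈ Finset.Nat.antidiagonalTuple (m + 1) (a 0),
          2 ^ (Ew m (fun k => a k.succ + r k.succ))
      = 2 ^ (∑ k : Fin m, (m - 1 - k.val) * a k.succ)
          * ∑ r ∈ Finset.Nat.antidiagonalTuple (m + 1) (a 0),
              2 ^ (∑ k : Fin m, (m - 1 - k.val) * r k.succ) := by
        rw [Finset.mul_sum]
        refine Finset.sum_congr rfl fun r _ => ?_
        rw [hsplit r, pow_add]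
    _ ≤ 2 ^ (∑ k : Fin m, (m - 1 - k.val) * a k.succ) * 2 ^ (a 0 * m) :=
        Nat.mul_le_mul_left _ (key m (a 0))
    _ = 2 ^ (Ew (m + 1) a) := by
        rw [← pow_add, hE]
        congr 1
        ring

def tailM (m : ℕ) (b : Fin (m + 1) → Fin (m + 1) → ℕ) : Fin m → Fin m → ℕ :=
  fun i j => b i.succ j.succ

lemma row0_sum (m : ℕ) (a : Fin (m + 1) → ℕ) (b : Fin (m + 1) → Fin (m + 1) → ℕ)
    (hb : IsTeslerMatrix (m + 1) a b) : ∑ j, b 0 j = a 0 := by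
  obtain ⟨htri, hhook⟩ := (isTesler_iff _ a b).mp hb
  have h := hhook 0
  rw [rS, cS] at h
  simpa [Fin.zero_le] using h

lemma tail_tesler (m : ℕ) (a : Fin (m + 1) → ℕ) (b : Fin (m + 1) → Fin (m + 1) → ℕ)
    (hb : IsTeslerMatrix (m + 1) a b) :
    IsTeslerMatrix m (fun k => a k.succ + b 0 k.succ) (tailM m b) := by
  obtain ⟨htri, hhook⟩ := (isTesler_iff _ a b).mp hb
  refine (isTesler_iff _ _ _).mpr ⟨?_, ?_⟩
  · intro i j hji
    exact htri i.succ j.succ (Fin.succ_lt_succ_iff.mpr hji)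
  · intro k
    have hk := hhook k.succ
    rw [rS, cS] at hk
    rw [rS, cS]
    have hrow : (∑ j : Fin (m + 1), if k.succ ≤ j then b k.succ j else 0)
        = ∑ j : Fin m, if k ≤ j then tailM m b k j else 0 := by
      rw [Fin.sum_univ_succ]
      have h0 : (if k.succ ≤ (0 : Fin (m + 1)) then b k.succ 0 else 0) = 0 := by
        rw [if_neg]
        simp [Fin.le_def]
      rw [h0, zero_add]
      exact Finset.sum_congr rfl fun j _ => by simp [Fin.succ_le_succ_iff, tailM]
    have hcol : (∑ i : Fin (m + 1), if i < k.succ then b i k.succ else 0)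
        = b 0 k.succ + ∑ i : Fin m, if i < k then tailM m b i k else 0 := by
      rw [Fin.sum_univ_succ]
      congr 1
      · exact Finset.sum_congr rfl fun i _ => by simp [Fin.succ_lt_succ_iff, tailM]
    rw [hrow, hcol] at hk
    omega

def PhiT (m : ℕ) (a : Fin (m + 1) → ℕ)
    (x : {b : Fin (m + 1) → Fin (m + 1) → ℕ // IsTeslerMatrix (m + 1) a b}) :
    Σ r : {r : Fin (m + 1) → ℕ // r ∈ Finset.Nat.antidiagonalTuple (m + 1) (a 0)},
      {b' : Fin m → Fin m → ℕ // IsTeslerMatrix m (fun k => a k.succ + r.1 k.succ) b'} :=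
  ⟨⟨x.1 0, Finset.Nat.mem_antidiagonalTuple.mpr (row0_sum m a x.1 x.2)⟩,
    ⟨tailM m x.1, tail_tesler m a x.1 x.2⟩⟩

lemma PhiT_inj (m : ℕ) (a : Fin (m + 1) → ℕ) : Function.Injective (PhiT m a) := by
  intro x y h
  have h1 : x.1 0 = y.1 0 := congrArg (fun z => (z.1.1 : Fin (m + 1) → ℕ)) h
  have h2 : tailM m x.1 = tailM m y.1 :=
    congrArg (fun z => (z.2.1 : Fin m → Fin m → ℕ)) h
  have htrix := ((isTesler_iff _ a x.1).mp x.2).1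
  have htriy := ((isTesler_iff _ a y.1).mp y.2).1
  refine Subtype.ext (funext fun i => funext fun j => ?_)
  refine Fin.cases ?_ (fun i' => ?_) i
  · exact congrFun h1 j
  · refine Fin.cases ?_ (fun j' => ?_) j
    · rw [htrix i'.succ 0 (Fin.succ_pos i'), htriy i'.succ 0 (Fin.succ_pos i')]
    · exact congrFun (congrFun h2 i') j'

lemma nat_card_sigma_le {α : Type*} (s : Finset α) (f : {x // x ∈ s} → Type*)
    [hf : ∀ i, Finite (f i)] (g : α → ℕ) (hg : ∀ i, Nat.card (f i) ≤ g i.1) :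
    Nat.card (Σ i, f i) ≤ ∑ x ∈ s, g x := by
  letI : ∀ i, Fintype (f i) := fun i => Fintype.ofFinite _
  rw [Nat.card_eq_fintype_card, Fintype.card_sigma]
  calc ∑ i, Fintype.card (f i) ≤ ∑ i : {x // x ∈ s}, g i.1 :=
        Finset.sum_le_sum fun i _ => by
          rw [← Nat.card_eq_fintype_card]
          exact hg i
    _ = ∑ x ∈ s, g x := Finset.sum_coe_sort s g

lemma upper (n : ℕ) : ∀ (a : Fin n → ℕ),
    Finite {b : Fin n → Fin n → ℕ // IsTeslerMatrix n a b} ∧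
    Nat.card {b : Fin n → Fin n → ℕ // IsTeslerMatrix n a b} ≤ 2 ^ Ew n a := by
  induction n with
  | zero =>
    intro a
    haveI hsub : Subsingleton {b : Fin 0 → Fin 0 → ℕ // IsTeslerMatrix 0 a b} := by
      constructor
      rintro ⟨b, _⟩ ⟨b', _⟩
      exact Subtype.ext (funext fun i => i.elim0)
    refine ⟨Finite.of_subsingleton, ?_⟩
    have h1 : Nat.card {b : Fin 0 → Fin 0 → ℕ // IsTeslerMatrix 0 a b} = 1 :=
      Nat.card_of_subsingleton ⟨fun _ _ => 0, fun i _ _ => i.elim0, fun k => k.elim0⟩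
    rw [h1]
    exact Nat.one_le_two_pow
  | succ m ih =>
    intro a
    classical
    haveI hFibF : ∀ r : {r : Fin (m + 1) → ℕ // r ∈ Finset.Nat.antidiagonalTuple (m + 1) (a 0)},
        Finite {b' : Fin m → Fin m → ℕ //
          IsTeslerMatrix m (fun k => a k.succ + r.1 k.succ) b'} :=
      fun r => (ih _).1
    haveI : Fintype {r : Fin (m + 1) → ℕ // r ∈ Finset.Nat.antidiagonalTuple (m + 1) (a 0)} :=
      FinsetCoe.fintype _
    haveI hSig : Finite (Σ r : {r : Fin (m + 1) → ℕ //
          r ∈ Finset.Nat.antidiagonalTuple (m + 1) (a 0)},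
        {b' : Fin m → Fin m → ℕ //
          IsTeslerMatrix m (fun k => a k.succ + r.1 k.succ) b'}) := by
      infer_instance
    refine ⟨Finite.of_injective (PhiT m a) (PhiT_inj m a), ?_⟩
    have hstep1 : Nat.card {b : Fin (m + 1) → Fin (m + 1) → ℕ // IsTeslerMatrix (m + 1) a b}
        ≤ Nat.card (Σ r : {r : Fin (m + 1) → ℕ //
              r ∈ Finset.Nat.antidiagonalTuple (m + 1) (a 0)},
            {b' : Fin m → Fin m → ℕ //
              IsTeslerMatrix m (fun k => a k.succ + r.1 k.succ) b'}) :=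
      Nat.card_le_card_of_injective (PhiT m a) (PhiT_inj m a)
    have hstep2 := nat_card_sigma_le (Finset.Nat.antidiagonalTuple (m + 1) (a 0))
      (fun r => {b' : Fin m → Fin m → ℕ //
        IsTeslerMatrix m (fun k => a k.succ + r.1 k.succ) b'})
      (fun r => 2 ^ (Ew m (fun k => a k.succ + r k.succ)))
      (fun r => (ih _).2)
    exact le_trans (le_trans hstep1 hstep2) (step_num m a)

end TeslerAux

/-- Bounds for the number `T_n(1,…,1)` of `n × n` Tesler matrices with all hook sums
equal to `1`:  `n! ≤ T_n(1,…,1) ≤ 2^{n(n-1)/2}`. -/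
theorem teslerMatrix_count_bounds (n : ℕ) (hn : 1 ≤ n) :
    n.factorial ≤ Nat.card {b : Fin n → Fin n → ℕ // IsTeslerMatrix n (fun _ => 1) b} ∧
    Nat.card {b : Fin n → Fin n → ℕ // IsTeslerMatrix n (fun _ => 1) b} ≤
      2 ^ (n * (n - 1) / 2) := by
  obtain ⟨hfin, hup⟩ := TeslerAux.upper n (fun _ => 1)
  haveI := hfin
  constructor
  · have hle := Nat.card_le_card_of_injective (TeslerAux.lowerMap n) (TeslerAux.lowerMap_inj n)
    rwa [TeslerAux.card_domain n] at hle
  · refine le_trans hup (le_of_eq ?_)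
    congr 1
    rw [TeslerAux.Ew]
    simp only [mul_one]
    rw [Fin.sum_univ_eq_sum_range (fun k => n - 1 - k) n,
      Finset.sum_range_reflect (fun x => x) n, Finset.sum_range_id]
end

section
/- Let n ≥ 2 and let a = (a_1,…,a_n) be a vector of nonnegative integers. Then T_n(a_1,…,a_n) = Σ_B ∏_{i=1}^{n−1} (1 + b_{i,i}), where the sum is over all (n−1)×(n−1) Tesler matrices B = (b_{i,j}) with hook sums (a_1,…,a_{n−1}). -/
open Finset

/-!
Adding the last column of an `(m+1) × (m+1)` Tesler matrix `b` to its diagonal and then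
deleting it gives an `m × m` Tesler matrix `B` with hook sums `(a_1, …, a_m)`, and
`b_{i,i} ≤ B_{i,i}`. Conversely, from `B` and any `c` with `c_i ≤ B_{i,i}` one recovers a
unique `b` with diagonal `c`: the last column is `B_{i,i} - c_i`, and its bottom entry is
forced by the last hook sum. Hence Tesler matrices with hook sums `a` are in bijection with
pairs `(B, c)`, and each `B` admits `∏ (1 + B_{i,i})` choices of `c`.
-/

open scoped ENNReal

section FinSums

variable {M : Type*} [AddCommMonoid M] {m : ℕ}

theorem sum_filter_castSucc_le (k : Fin m) (f : Fin (m + 1) → M) :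
    ∑ j ∈ univ.filter (fun j => k.castSucc ≤ j), f j
      = ∑ j ∈ univ.filter (fun j => k ≤ j), f j.castSucc + f (Fin.last m) := by
  simp [Finset.sum_filter, Fin.sum_univ_castSucc, Fin.le_last]

theorem sum_filter_lt_castSucc (k : Fin m) (f : Fin (m + 1) → M) :
    ∑ i ∈ univ.filter (fun i => i < k.castSucc), f i
      = ∑ i ∈ univ.filter (fun i => i < k), f i.castSucc := by
  simp [Finset.sum_filter, Fin.sum_univ_castSucc, Fin.not_lt.mpr (Fin.le_last k.castSucc)]

end FinSums

section HookSum

variable {n m : ℕ}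

def hookSum (b : Fin n → Fin n → ℕ) (k : Fin n) : ℤ :=
  ∑ j ∈ univ.filter (fun j => k ≤ j), (b k j : ℤ)
    - ∑ i ∈ univ.filter (fun i => i < k), (b i k : ℤ)

theorem isTeslerMatrix_iff {a : Fin n → ℕ} {b : Fin n → Fin n → ℕ} :
    IsTeslerMatrix n a b ↔ (∀ i j, j < i → b i j = 0) ∧ ∀ k, hookSum b k = a k :=
  Iff.rfl

theorem IsTeslerMatrix.hookSum_eq {a : Fin n → ℕ} {b : Fin n → Fin n → ℕ}
    (hb : IsTeslerMatrix n a b) (k : Fin n) : hookSum b k = a k :=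
  hb.2 k

theorem hookSum_last (b : Fin (m + 1) → Fin (m + 1) → ℕ) :
    hookSum b (Fin.last m) =
      b (Fin.last m) (Fin.last m) - ∑ i : Fin m, (b i.castSucc (Fin.last m) : ℤ) := by
  simp [hookSum, Finset.sum_filter, Fin.sum_univ_castSucc, Fin.last_le_iff,
    Fin.castSucc_lt_last]

end HookSum

section Fold

variable {m : ℕ}

def foldLastColumn (b : Fin (m + 1) → Fin (m + 1) → ℕ) : Fin m → Fin m → ℕ := fun i j =>
  b i.castSucc j.castSucc + if i = j then b i.castSucc (Fin.last m) else 0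

def unfoldLastColumn (a : Fin (m + 1) → ℕ) (B : Fin m → Fin m → ℕ) (c : Fin m → ℕ) :
    Fin (m + 1) → Fin (m + 1) → ℕ :=
  Fin.lastCases (motive := fun _ => Fin (m + 1) → ℕ)
    (Fin.lastCases (a (Fin.last m) + ∑ l, (B l l - c l)) fun _ => 0)
    fun i => Fin.lastCases (B i i - c i) fun j => if i = j then c i else B i j

theorem hookSum_foldLastColumn (b : Fin (m + 1) → Fin (m + 1) → ℕ) (k : Fin m) :
    hookSum (foldLastColumn b) k = hookSum b k.castSucc := by
  simp [hookSum, sum_filter_castSucc_le, sum_filter_lt_castSucc, foldLastColumn, sum_add_distrib]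

theorem isTeslerMatrix_foldLastColumn {a : Fin (m + 1) → ℕ}
    {b : Fin (m + 1) → Fin (m + 1) → ℕ} (hb : IsTeslerMatrix (m + 1) a b) :
    IsTeslerMatrix m (fun i => a i.castSucc) (foldLastColumn b) := by
  refine ⟨fun i j hji => ?_, fun k => (hookSum_foldLastColumn b k).trans (hb.hookSum_eq _)⟩
  simp [foldLastColumn, hji.ne', hb.1 _ _ (Fin.castSucc_lt_castSucc_iff.mpr hji)]

@[simp]
theorem unfoldLastColumn_castSucc_castSucc (a : Fin (m + 1) → ℕ) (B : Fin m → Fin m → ℕ)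
    (c : Fin m → ℕ) (i j : Fin m) :
    unfoldLastColumn a B c i.castSucc j.castSucc = if i = j then c i else B i j := by
  simp [unfoldLastColumn]

@[simp]
theorem unfoldLastColumn_castSucc_last (a : Fin (m + 1) → ℕ) (B : Fin m → Fin m → ℕ)
    (c : Fin m → ℕ) (i : Fin m) :
    unfoldLastColumn a B c i.castSucc (Fin.last m) = B i i - c i := by
  simp [unfoldLastColumn]

@[simp]
theorem unfoldLastColumn_last_castSucc (a : Fin (m + 1) → ℕ) (B : Fin m → Fin m → ℕ)
    (c : Fin m → ℕ) (j : Fin m) :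
    unfoldLastColumn a B c (Fin.last m) j.castSucc = 0 := by
  simp [unfoldLastColumn]

@[simp]
theorem unfoldLastColumn_last_last (a : Fin (m + 1) → ℕ) (B : Fin m → Fin m → ℕ)
    (c : Fin m → ℕ) :
    unfoldLastColumn a B c (Fin.last m) (Fin.last m) = a (Fin.last m) + ∑ l, (B l l - c l) := by
  simp [unfoldLastColumn]

theorem foldLastColumn_unfoldLastColumn {a : Fin (m + 1) → ℕ} {B : Fin m → Fin m → ℕ}
    {c : Fin m → ℕ} (hc : ∀ i, c i ≤ B i i) :
    foldLastColumn (unfoldLastColumn a B c) = B := by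
  funext i j
  by_cases hij : i = j
  · subst hij
    simp [foldLastColumn, Nat.add_sub_cancel' (hc i)]
  · simp [foldLastColumn, hij]

end Fold

section Unfold

variable {m : ℕ} {a : Fin (m + 1) → ℕ}

theorem isTeslerMatrix_unfoldLastColumn {B : Fin m → Fin m → ℕ} {c : Fin m → ℕ}
    (hB : IsTeslerMatrix m (fun i => a i.castSucc) B) (hc : ∀ i, c i ≤ B i i) :
    IsTeslerMatrix (m + 1) a (unfoldLastColumn a B c) := by
  refine isTeslerMatrix_iff.mpr ⟨fun i j hji => ?_, fun k => ?_⟩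
  · induction j using Fin.lastCases with
    | last => exact absurd hji (Fin.le_last i).not_gt
    | cast j =>
      induction i using Fin.lastCases with
      | last => simp
      | cast i =>
        have hji' := Fin.castSucc_lt_castSucc_iff.mp hji
        simp [hji'.ne', hB.1 i j hji']
  · induction k using Fin.lastCases with
    | last => simp [hookSum_last, Nat.cast_sub (hc _)]
    | cast k =>
      rw [← hookSum_foldLastColumn, foldLastColumn_unfoldLastColumn hc]
      exact hB.hookSum_eq k

theorem unfoldLastColumn_foldLastColumn {b : Fin (m + 1) → Fin (m + 1) → ℕ}
    (hb : IsTeslerMatrix (m + 1) a b) :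
    unfoldLastColumn a (foldLastColumn b) (fun i => b i.castSucc i.castSucc) = b := by
  funext i j
  induction i using Fin.lastCases with
  | last =>
    induction j using Fin.lastCases with
    | last =>
      have hlast := hb.hookSum_eq (Fin.last m)
      rw [hookSum_last] at hlast
      simp only [unfoldLastColumn_last_last, foldLastColumn, if_pos, add_tsub_cancel_left]
      zify
      linarith
    | cast j => simp [hb.1 _ _ (Fin.castSucc_lt_last j)]
  | cast i =>
    induction j using Fin.lastCases with
    | last => simp [foldLastColumn]
    | cast j =>
      by_cases hij : i = j
      · simp [hij]
      · simp [foldLastColumn, hij]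

end Unfold

def teslerMatrixEquivSigma {m : ℕ} (a : Fin (m + 1) → ℕ) :
    {b // IsTeslerMatrix (m + 1) a b} ≃
      Σ B : {B // IsTeslerMatrix m (fun i => a i.castSucc) B},
        {c : Fin m → ℕ // ∀ i, c i ≤ B.1 i i} where
  toFun b := ⟨⟨foldLastColumn b.1, isTeslerMatrix_foldLastColumn b.2⟩,
    ⟨fun i => b.1 i.castSucc i.castSucc, fun i => by simp [foldLastColumn]⟩⟩
  invFun p := ⟨unfoldLastColumn a p.1.1 p.2.1, isTeslerMatrix_unfoldLastColumn p.1.2 p.2.2⟩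
  left_inv b := Subtype.ext (unfoldLastColumn_foldLastColumn b.2)
  right_inv p := Sigma.subtype_ext (Subtype.ext (foldLastColumn_unfoldLastColumn p.2.2))
    (funext fun i => by simp)

theorem Nat.card_subtype_forall_le {ι : Type*} [Fintype ι] (k : ι → ℕ) :
    Nat.card {c : ι → ℕ // ∀ i, c i ≤ k i} = ∏ i, (k i + 1) := by
  rw [Nat.card_congr (Equiv.subtypePiEquivPi (β := fun _ => ℕ) (p := fun i x => x ≤ k i)),
    Nat.card_pi]
  exact prod_congr rfl fun i _ => Set.ncard_Iic_nat (k i)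

theorem finite_teslerMatrices :
    ∀ (n : ℕ) (a : Fin n → ℕ), Finite {b // IsTeslerMatrix n a b}
  | 0, _ => inferInstance
  | m + 1, a =>
    have := finite_teslerMatrices m fun i => a i.castSucc
    have (k : Fin m → ℕ) : Finite {c : Fin m → ℕ // ∀ i, c i ≤ k i} :=
      Nat.finite_of_card_ne_zero (by rw [Nat.card_subtype_forall_le]; positivity)
    .of_equiv _ (teslerMatrixEquivSigma a).symm

theorem card_teslerMatrices_succ {m : ℕ} (a : Fin (m + 1) → ℕ) :
    (Nat.card {b // IsTeslerMatrix (m + 1) a b} : ℝ≥0∞) =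
      ∑' B : {B // IsTeslerMatrix m (fun i => a i.castSucc) B},
        ∏ i, ((1 + B.1 i i : ℕ) : ℝ≥0∞) := by
  have := finite_teslerMatrices m fun i => a i.castSucc
  have := Fintype.ofFinite {B // IsTeslerMatrix m (fun i => a i.castSucc) B}
  rw [Nat.card_congr (teslerMatrixEquivSigma a), Nat.card_sigma, tsum_fintype]
  simp [Nat.card_subtype_forall_le, add_comm]

/-- The recursion `T_n(a_1,…,a_n) = ∑_B ∏_{i=1}^{n-1} (1 + b_{i,i})`, where the sum is
over all `(n-1) × (n-1)` Tesler matrices `B` with hook sums `(a_1,…,a_{n-1})`.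
(The equality is stated in `ℝ≥0∞` so that the possibly infinite sum is defined;
both sides are in fact finite.) -/
theorem teslerMatrix_count_recursion (n : ℕ) (hn : 2 ≤ n) (a : Fin n → ℕ) :
    (Nat.card {b : Fin n → Fin n → ℕ // IsTeslerMatrix n a b} : ENNReal) =
      ∑' B : {B : Fin (n - 1) → Fin (n - 1) → ℕ //
          IsTeslerMatrix (n - 1) (fun i => a (Fin.castLE (Nat.sub_le n 1) i)) B},
        ∏ i : Fin (n - 1), ((1 + B.val i i : ℕ) : ENNReal) := by
  obtain ⟨m, rfl⟩ : ∃ m, n = m + 1 := ⟨n - 1, by omega⟩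
  exact card_teslerMatrices_succ a
end

section
/- For every n ≥ 1, the rational number identity (n(n−1))! / ( n! · (∏_{i=1}^{n−1} i!)^2 ) = f^{(n−1)^n} · ∏_{i=1}^{n−1} ( ((i+1)/2) · Cat(i)^2 ) holds, where f^{(n−1)^n} = (n(n−1))! · ∏_{k=0}^{n−1} k! / ∏_{k=0}^{n−1} (n+k−1)! is the number of standard Young tableaux of rectangular shape (n−1)^n and Cat(i) = (1/(i+1))·C(2i,i) is the i-th Catalan number. -/
/-! Writing `Cat(i) = (2i)! / (i! ^ 2 (i + 1))` and `∏_{i=1}^{m} i! = sf m` (with `n = m + 1`),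
both sides become rational expressions in factorials and superfactorials, and the identity
reduces to `sf m · ∏_{k=0}^{m} (m + k)! = m! · sf (2m)` and
`(∏_{i=1}^{m} (2i)!)² = 2^m · m! · sf (2m)`; the latter holds because
`sf (2m + 2) = (2m + 2)! (2m + 1)! sf (2m)` and `(2m + 2)! = (2m + 2) (2m + 1)!`. -/

open Finset Nat

namespace Nat

theorem superFactorial_pos (n : ℕ) : 0 < sf n :=
  prod_Icc_factorial n ▸ prod_pos fun i _ => factorial_pos i

theorem superFactorial_add (m j : ℕ) :
    sf (m + j) = (sf m) * ∏ k ∈ range j, (m + k + 1)! := by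
  induction j with
  | zero => simp
  | succ j ih =>
    rw [← add_assoc, superFactorial_succ, ih, prod_range_succ]
    ring

theorem superFactorial_mul_prod_range_add_factorial (m : ℕ) :
    (sf m) * ∏ k ∈ range (m + 1), (m + k)! = m ! * sf (2 * m) := by
  rw [prod_range_succ', two_mul, superFactorial_add]
  simp only [add_assoc, add_zero]
  ring

theorem sq_prod_Icc_factorial_two_mul (m : ℕ) :
    (∏ i ∈ Icc 1 m, (2 * i)!) ^ 2 = 2 ^ m * m ! * sf (2 * m) := by
  induction m with
  | zero => rfl
  | succ m ih =>
    have hsf : sf (2 * (m + 1)) = (2 * m + 2)! * (2 * m + 1)! * sf (2 * m) := by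
      rw [mul_add_one, superFactorial_succ, superFactorial_succ, mul_assoc]
    rw [prod_Icc_succ_top (by omega), mul_pow, ih, hsf, mul_add_one 2 m,
      factorial_succ (2 * m + 1), factorial_succ m]
    ring

theorem prod_Icc_add_one (m : ℕ) : ∏ i ∈ Icc 1 m, (i + 1) = (m + 1)! := by
  induction m with
  | zero => rfl
  | succ m ih => rw [prod_Icc_succ_top (by omega), ih, mul_comm, ← factorial_succ]

end Nat

section Catalan

variable {K : Type*} [Field K] [CharZero K]

theorem half_succ_mul_sq_catalan (i : ℕ) :
    ((i : K) + 1) / 2 * (1 / ((i : K) + 1) * ((2 * i).choose i : ℕ)) ^ 2 =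
      ((2 * i)! : K) ^ 2 / (2 * ((i : K) + 1) * (i ! : K) ^ 4) := by
  have hchoose : ((2 * i).choose i : K) = (2 * i)! / (i ! * i !) := by
    rw [Nat.cast_choose K (by omega : i ≤ 2 * i), show 2 * i - i = i by omega]
  have hi : (i : K) + 1 ≠ 0 := Nat.cast_add_one_ne_zero i
  rw [hchoose]
  field_simp

theorem prod_half_succ_mul_sq_catalan (m : ℕ) :
    ∏ i ∈ Icc 1 m, (((i : K) + 1) / 2 * (1 / ((i : K) + 1) * ((2 * i).choose i : ℕ)) ^ 2) =
      (2 ^ m * m ! * sf (2 * m) : ℕ) / (2 ^ m * (m + 1)! * (sf m : K) ^ 4) := by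
  simp only [half_succ_mul_sq_catalan, prod_div_distrib, prod_mul_distrib, prod_const,
    Nat.card_Icc, add_tsub_cancel_right, prod_pow]
  rw [← sq_prod_Icc_factorial_two_mul, ← prod_Icc_factorial]
  push_cast [← prod_Icc_add_one]
  ring

end Catalan

/-- For every `n ≥ 1`,
`(n(n-1))! / (n! · (∏_{i=1}^{n-1} i!)²) = f^{(n-1)^n} · ∏_{i=1}^{n-1} ((i+1)/2 · Cat(i)²)`,
where `f^{(n-1)^n} = (n(n-1))! · ∏_{k=0}^{n-1} k! / ∏_{k=0}^{n-1} (n+k-1)!` is the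
number of standard Young tableaux of rectangular shape `(n-1)^n` and
`Cat(i) = C(2i,i)/(i+1)` is the `i`-th Catalan number. -/
theorem rectangular_catalan_identity (n : ℕ) (hn : 1 ≤ n) :
    ((n * (n - 1)).factorial : ℚ) /
        ((n.factorial : ℚ) * (∏ i ∈ Finset.Icc 1 (n - 1), (i.factorial : ℚ)) ^ 2) =
      (((n * (n - 1)).factorial : ℚ) * (∏ k ∈ Finset.range n, (k.factorial : ℚ)) /
          ∏ k ∈ Finset.range n, ((n + k - 1).factorial : ℚ)) *
        ∏ i ∈ Finset.Icc 1 (n - 1),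
          ((((i : ℚ) + 1) / 2) * ((1 / ((i : ℚ) + 1)) * (((2 * i).choose i : ℕ) : ℚ)) ^ 2) := by
  obtain ⟨m, rfl⟩ := Nat.exists_eq_add_of_le' hn
  have hsf : ∀ j, (sf j : ℚ) ≠ 0 := fun j => Nat.cast_ne_zero.mpr (superFactorial_pos j).ne'
  have hshift : ∏ k ∈ range (m + 1), ((m + 1 + k - 1)! : ℚ) = m ! * (sf (2 * m) : ℚ) / sf m := by
    simp only [add_right_comm m 1, add_tsub_cancel_right]
    rw [eq_div_iff (hsf m), mul_comm]
    exact_mod_cast superFactorial_mul_prod_range_add_factorial m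
  rw [add_tsub_cancel_right, hshift, prod_half_succ_mul_sq_catalan]
  simp only [← Nat.cast_prod, prod_Icc_factorial, prod_range_succ_factorial]
  push_cast
  field_simp [hsf]
end
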